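/- arXiv:2311.18295 — 7 statements merged into one kernel-verified Lean document; each statement's English description precedes it below -/
import Mathlib

section
/- Let A be a γ-approximate ℓ1-oblivious routing for G with lengths ℓ, let P = I − A B^T be the associated cycle projection matrix, and suppose Δ* is a nonzero circulation (B^T Δ* = 0) minimizing g^T Δ / ‖L Δ‖_1. Then there exists an edge e ∈ E such that g^T (Δ*_e · P 1_e) / ‖L (Δ*_e · P 1_e)‖_1 ≤ (1/(1+γ)) · g^T Δ* / ‖L Δ*‖_1. -/
/-!
Since `Δ` is a circulation, `PΔ = Δ`, i.e. `Δ = ∑ₑ Δₑ · P 1ₑ`. The gains `gᵀ(Δₑ · P 1ₑ)` therefore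
add up to `gᵀΔ`, while the lengths `‖L(Δₑ · P 1ₑ)‖₁` add up to at least `‖LΔ‖₁` (triangle
inequality) and at most `(1 + γ)‖LΔ‖₁` (the routing bound applied to the column `L A Bᵀ 1ₑ`).
As `gᵀΔ < 0`, the mediant inequality yields an edge whose ratio is at most
`gᵀΔ / ((1 + γ)‖LΔ‖₁)`.
-/

open Matrix

theorem exists_div_le_of_sum_le_mul_sum {K ι : Type*} [Field K] [LinearOrder K]
    [IsStrictOrderedRing K] [Fintype ι] (n d : ι → K) (c : K) (hd : ∀ i, 0 ≤ d i)
    (hn : ∀ i, d i = 0 → n i = 0) (hpos : 0 < ∑ i, d i) (hsum : ∑ i, n i ≤ c * ∑ i, d i) :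
    ∃ i, n i / d i ≤ c := by
  by_contra! h
  have hlt : ∀ i, 0 < d i → c * d i < n i := fun i hdi => (lt_div_iff₀ hdi).mp (h i)
  have hle : ∀ i, c * d i ≤ n i := fun i => by
    rcases (hd i).eq_or_lt with hdi | hdi
    · simp [← hdi, hn i hdi.symm]
    · exact (hlt i hdi).le
  obtain ⟨i, -, hdi⟩ := Finset.exists_lt_of_sum_lt (s := Finset.univ) (f := fun _ => (0 : K))
    (by simpa using hpos)
  have : c * ∑ i, d i < ∑ i, n i := by
    rw [Finset.mul_sum]
    exact Finset.sum_lt_sum (fun i _ => hle i) ⟨i, Finset.mem_univ i, hlt i hdi⟩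
  linarith

section

variable {E : Type*} [Fintype E]

/-- `‖L x‖₁` for `L = diagonal ℓ`. -/
def weightedL1 (ℓ x : E → ℝ) : ℝ := ∑ i, |ℓ i * x i|

theorem weightedL1_nonneg (ℓ x : E → ℝ) : 0 ≤ weightedL1 ℓ x :=
  Finset.sum_nonneg fun _ _ => abs_nonneg _

theorem eq_zero_of_weightedL1_eq_zero {ℓ : E → ℝ} (hℓ : ∀ i, ℓ i ≠ 0) {x : E → ℝ}
    (hx : weightedL1 ℓ x = 0) : x = 0 := by
  funext i
  have := (Finset.sum_eq_zero_iff_of_nonneg fun i _ => abs_nonneg (ℓ i * x i)).mp hx i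
    (Finset.mem_univ i)
  simpa [hℓ i] using this

theorem weightedL1_smul (ℓ : E → ℝ) (c : ℝ) (x : E → ℝ) :
    weightedL1 ℓ (c • x) = |c| * weightedL1 ℓ x := by
  simp only [weightedL1, Finset.mul_sum, ← abs_mul, Pi.smul_apply, smul_eq_mul]
  congr! 2
  ring

theorem weightedL1_sub_le (ℓ x y : E → ℝ) :
    weightedL1 ℓ (x - y) ≤ weightedL1 ℓ x + weightedL1 ℓ y := by
  simp only [weightedL1, ← Finset.sum_add_distrib, Pi.sub_apply, mul_sub]
  exact Finset.sum_le_sum fun i _ => abs_sub _ _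

theorem weightedL1_sum_le {ι : Type*} (ℓ : E → ℝ) (s : Finset ι) (x : ι → E → ℝ) :
    weightedL1 ℓ (∑ j ∈ s, x j) ≤ ∑ j ∈ s, weightedL1 ℓ (x j) := by
  simp only [weightedL1, Finset.sum_apply, Finset.mul_sum]
  rw [Finset.sum_comm]
  exact Finset.sum_le_sum fun i _ => Finset.abs_sum_le_sum_abs _ _

variable [DecidableEq E]

theorem weightedL1_single_one (ℓ : E → ℝ) (e : E) : weightedL1 ℓ (Pi.single e 1) = |ℓ e| := by
  simp [weightedL1, Pi.single_apply, apply_ite abs]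

theorem weightedL1_mulVec_single_one_le {ℓ : E → ℝ} {M : Matrix E E ℝ} {γ : ℝ}
    (hM : ∀ x : E → ℝ,
      ∑ i, |((diagonal ℓ * M * diagonal (fun i => (ℓ i)⁻¹)) *ᵥ x) i| ≤ γ * ∑ i, |x i|)
    {e : E} (hℓe : ℓ e ≠ 0) :
    weightedL1 ℓ (M *ᵥ Pi.single e 1) ≤ γ * |ℓ e| := by
  have h := hM (Pi.single e (ℓ e))
  simpa [← mulVec_mulVec, diagonal_mulVec_single, hℓe, mulVec_diagonal, Pi.single_apply,
    apply_ite abs, weightedL1] using h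

theorem weightedL1_smul_one_sub_mulVec_single_one_le {ℓ : E → ℝ} {M : Matrix E E ℝ} {γ : ℝ}
    (hM : ∀ x : E → ℝ,
      ∑ i, |((diagonal ℓ * M * diagonal (fun i => (ℓ i)⁻¹)) *ᵥ x) i| ≤ γ * ∑ i, |x i|)
    {e : E} (hℓe : ℓ e ≠ 0) (c : ℝ) :
    weightedL1 ℓ (c • (1 - M) *ᵥ Pi.single e 1) ≤ (1 + γ) * |ℓ e * c| := by
  have hcol : weightedL1 ℓ (Pi.single e 1 - M *ᵥ Pi.single e 1) ≤ |ℓ e| + γ * |ℓ e| := by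
    grw [weightedL1_sub_le, weightedL1_single_one, weightedL1_mulVec_single_one_le hM hℓe]
  calc weightedL1 ℓ (c • (1 - M) *ᵥ Pi.single e 1)
      = |c| * weightedL1 ℓ (Pi.single e 1 - M *ᵥ Pi.single e 1) := by
        rw [weightedL1_smul, sub_mulVec, one_mulVec]
    _ ≤ |c| * (|ℓ e| + γ * |ℓ e|) := by gcongr
    _ = (1 + γ) * |ℓ e * c| := by rw [abs_mul]; ring

end

section

variable {V E : Type*} [Fintype V] [Fintype E] [DecidableEq E]

theorem sum_smul_mulVec_single_one (M : Matrix E E ℝ) (x : E → ℝ) :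
    ∑ e, x e • M *ᵥ Pi.single e 1 = M *ᵥ x := by
  simp_rw [← mulVec_smul, ← mulVec_sum]
  congr 1
  simp_rw [← Pi.single_smul', smul_eq_mul, mul_one]
  exact Finset.univ_sum_single x

theorem cycleProj_mulVec_of_circulation {A B : Matrix E V ℝ} {Δ : E → ℝ}
    (hcirc : Bᵀ *ᵥ Δ = 0) : (1 - A * Bᵀ) *ᵥ Δ = Δ := by
  rw [sub_mulVec, one_mulVec, ← mulVec_mulVec, hcirc, mulVec_zero, sub_zero]

end

theorem stmt_2_general {V E : Type*} [Fintype V] [Fintype E] [DecidableEq E]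
    (B A : Matrix E V ℝ) (ℓ g : E → ℝ) (hℓ : ∀ e, 0 < ℓ e) (γ : ℝ) (hγ : 0 ≤ γ)
    (hnorm : ∀ x : E → ℝ,
      (∑ e, |(Matrix.diagonal ℓ * A * Bᵀ * Matrix.diagonal (fun e => (ℓ e)⁻¹)).mulVec x e|)
        ≤ γ * (∑ e, |x e|))
    (Δ : E → ℝ) (hcirc : Bᵀ.mulVec Δ = 0)
    (hneg : (∑ e, g e * Δ e) / (∑ e, |ℓ e * Δ e|) < 0) :
    ∃ e : E,
      (∑ i, g i * (Δ e * ((1 - A * Bᵀ).mulVec (Pi.single e 1)) i)) /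
          (∑ i, |ℓ i * (Δ e * ((1 - A * Bᵀ).mulVec (Pi.single e 1)) i)|)
        ≤ (1 / (1 + γ)) * ((∑ e, g e * Δ e) / (∑ e, |ℓ e * Δ e|)) := by
  set x : E → E → ℝ := fun e => Δ e • (1 - A * Bᵀ) *ᵥ Pi.single e 1
  have hℓ₀ : ∀ e, ℓ e ≠ 0 := fun e => (hℓ e).ne'
  have hΔ : ∑ e, x e = Δ := by
    rw [sum_smul_mulVec_single_one, cycleProj_mulVec_of_circulation hcirc]
  obtain ⟨hS, hD⟩ : g ⬝ᵥ Δ < 0 ∧ 0 < weightedL1 ℓ Δ := by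
    rcases div_neg_iff.mp hneg with h | h
    · exact absurd h.2 (weightedL1_nonneg ℓ Δ).not_gt
    · exact h
  have hT : weightedL1 ℓ Δ ≤ ∑ e, weightedL1 ℓ (x e) :=
    hΔ ▸ weightedL1_sum_le ℓ Finset.univ x
  have hTD : ∑ e, weightedL1 ℓ (x e) ≤ (1 + γ) * weightedL1 ℓ Δ := by
    rw [weightedL1, Finset.mul_sum]
    exact Finset.sum_le_sum fun e _ =>
      weightedL1_smul_one_sub_mulVec_single_one_le
        (fun y => Matrix.mul_assoc (diagonal ℓ) A Bᵀ ▸ hnorm y) (hℓ₀ e) (Δ e)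
  refine exists_div_le_of_sum_le_mul_sum (fun e => g ⬝ᵥ x e) (fun e => weightedL1 ℓ (x e)) _
    (fun e => weightedL1_nonneg ℓ (x e))
    (fun e he => by simp [eq_zero_of_weightedL1_eq_zero hℓ₀ he]) (hD.trans_le hT) ?_
  change ∑ e, g ⬝ᵥ x e ≤ 1 / (1 + γ) * (g ⬝ᵥ Δ / weightedL1 ℓ Δ) * ∑ e, weightedL1 ℓ (x e)
  have hγ₁ : 0 < 1 + γ := by linarith
  have hc : 1 / (1 + γ) * (g ⬝ᵥ Δ / weightedL1 ℓ Δ) ≤ 0 :=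
    mul_nonpos_of_nonneg_of_nonpos (one_div_pos.mpr hγ₁).le (div_neg_of_neg_of_pos hS hD).le
  calc ∑ e, g ⬝ᵥ x e
      = 1 / (1 + γ) * (g ⬝ᵥ Δ / weightedL1 ℓ Δ) * ((1 + γ) * weightedL1 ℓ Δ) := by
        rw [← dotProduct_sum, hΔ]
        field_simp
    _ ≤ _ := mul_le_mul_of_nonpos_left hTD hc

/-- Let `A` be a γ-approximate ℓ1-oblivious routing for `G`, `P = I − A Bᵀ` the cycle
projection matrix, and `Δ` a nonzero circulation minimizing `gᵀΔ/‖LΔ‖₁` (with negative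
optimal value). Then there is an edge `e` with
`gᵀ(Δ_e · P 1_e)/‖L(Δ_e · P 1_e)‖₁ ≤ (1/(1+γ)) · gᵀΔ/‖LΔ‖₁`. -/
theorem stmt_2 {V E : Type*} [Fintype V] [Fintype E] [DecidableEq E]
    (B A : Matrix E V ℝ) (ℓ g : E → ℝ) (hℓ : ∀ e, 0 < ℓ e) (γ : ℝ) (hγ : 0 ≤ γ)
    (hroute : ∀ d : V → ℝ, (∑ v, d v) = 0 → Bᵀ.mulVec (A.mulVec d) = d)
    (hnorm : ∀ x : E → ℝ,
      (∑ e, |(Matrix.diagonal ℓ * A * Bᵀ * Matrix.diagonal (fun e => (ℓ e)⁻¹)).mulVec x e|)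
        ≤ γ * (∑ e, |x e|))
    (Δ : E → ℝ) (hcirc : Bᵀ.mulVec Δ = 0) (hne : Δ ≠ 0)
    (hopt : ∀ Δ' : E → ℝ, Bᵀ.mulVec Δ' = 0 → Δ' ≠ 0 →
      (∑ e, g e * Δ e) / (∑ e, |ℓ e * Δ e|) ≤ (∑ e, g e * Δ' e) / (∑ e, |ℓ e * Δ' e|))
    (hneg : (∑ e, g e * Δ e) / (∑ e, |ℓ e * Δ e|) < 0) :
    ∃ e : E,
      (∑ i, g i * (Δ e * ((1 - A * Bᵀ).mulVec (Pi.single e 1)) i)) /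
          (∑ i, |ℓ i * (Δ e * ((1 - A * Bᵀ).mulVec (Pi.single e 1)) i)|)
        ≤ (1 / (1 + γ)) * ((∑ e, g e * Δ e) / (∑ e, |ℓ e * Δ e|)) :=
  stmt_2_general B A ℓ g hℓ γ hγ hnorm Δ hcirc hneg
end

section
/- Let H be an undirected graph on n vertices with girth strictly greater than 2 log₂ n. Then H has at most 4n edges. -/
/-!
If `H` had more than `4n` edges, repeatedly deleting vertices of degree at most 4 would leave a
nonempty induced subgraph of minimum degree at least 5, still of girth greater than `2k` with
`k = ⌊log₂ n⌋`. In it, the only neighbour of the start of a short path lying on the path is its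
second vertex, so every path of length `j < k` ending at a fixed vertex extends in at least 4 ways,
while two paths of length `k` with the same endpoints would close a cycle of length at most `2k`.
Hence `4 ^ k ≤ n < 2 ^ (k + 1)`, which is impossible for `k ≥ 1`.
-/

open Finset

namespace SimpleGraph
variable {V : Type*} {G : SimpleGraph V}

theorem natCast_lt_egirth {m : ℕ} (h : ∀ v (c : G.Walk v v), c.IsCycle → m < c.length) :
    (m : ℕ∞) < G.egirth := by
  rw [← ENat.add_one_le_iff (ENat.natCast_ne_top m), le_egirth]
  exact fun v c hc => by exact_mod_cast h v c hc

theorem Walk.IsPath.eq_of_length_add_length_lt_egirth {u v : V} {p q : G.Walk u v}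
    (hp : p.IsPath) (hq : q.IsPath) (hlt : (p.length + q.length : ℕ∞) < G.egirth) : p = q := by
  -- The union of two distinct paths contains a cycle, of length at most its number of edges.
  let G' := fromEdgeSet {e | e ∈ p.edges ++ q.edges}
  have hle : G' ≤ G := (fromEdgeSet_le G).mpr fun e ⟨he, _⟩ => by
    rcases List.mem_append.mp he with he | he
    · exact p.edges_subset_edgeSet he
    · exact q.edges_subset_edgeSet he
  have hp' : ∀ e ∈ p.edges, e ∈ G'.edgeSet := fun e he => by
    rw [edgeSet_fromEdgeSet]
    exact ⟨List.mem_append_left _ he, G.not_isDiag_of_mem_edgeSet (p.edges_subset_edgeSet he)⟩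
  have hq' : ∀ e ∈ q.edges, e ∈ G'.edgeSet := fun e he => by
    rw [edgeSet_fromEdgeSet]
    exact ⟨List.mem_append_right _ he, G.not_isDiag_of_mem_edgeSet (q.edges_subset_edgeSet he)⟩
  by_contra hne
  have hcyclic : ¬ G'.IsAcyclic := fun hA => hne <| Walk.ext_support <| by
    simpa using congrArg (fun r : G'.Path u v => r.1.support)
      ((hA.subsingleton_path u v).elim ⟨_, hp.transfer hp'⟩ ⟨_, hq.transfer hq'⟩)
  obtain ⟨a, c, hc, -⟩ := exists_egirth_eq_length.mpr hcyclic
  have hc_len : (c.length : ℕ∞) ≤ p.length + q.length := by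
    norm_cast
    rw [← c.length_edges, ← p.length_edges, ← q.length_edges, ← List.length_append]
    refine (hc.isTrail.edges_nodup.subperm fun e he => ?_).length_le
    have := c.edges_subset_edgeSet he
    rw [edgeSet_fromEdgeSet] at this
    exact this.1
  exact (hlt.trans_le ((egirth_anti hle).trans (egirth_le_length hc))).not_ge hc_len

theorem Walk.IsPath.eq_snd_of_adj_of_length_lt_egirth [DecidableEq V] {u v w : V}
    {p : G.Walk u v} (hp : p.IsPath) (hlen : (p.length + 1 : ℕ∞) < G.egirth)
    (hadj : G.Adj u w) (hw : w ∈ p.support) : w = p.snd := by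
  have hle : ((p.takeUntil w hw).length + 1 : ℕ∞) ≤ p.length + 1 := by
    gcongr; exact_mod_cast p.length_takeUntil_le_length hw
  have := (hp.takeUntil hw).eq_of_length_add_length_lt_egirth (Path.singleton hadj).2
    (hle.trans_lt hlen)
  rw [← p.snd_takeUntil hadj.ne.symm hw, this]
  simp

section PathCounting
variable [Fintype V] [DecidableEq V] [DecidableRel G.Adj]

variable (G) in
abbrev PathsTo (v : V) (j : ℕ) : Type _ := Σ u, {p : G.Walk u v // p.IsPath ∧ p.length = j}

theorem mul_card_pathsTo_le_card_pathsTo_succ {d j : ℕ} {v : V} (hdeg : ∀ u, d < G.degree u)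
    (hj : (j + 1 : ℕ∞) < G.egirth) :
    d * Fintype.card (G.PathsTo v j) ≤ Fintype.card (G.PathsTo v (j + 1)) := by
  let Extension (t : G.PathsTo v j) := {x // G.Adj t.1 x ∧ x ∉ t.2.1.support}
  let extend (e : Σ t, Extension t) : G.PathsTo v (j + 1) :=
    ⟨e.2, .cons e.2.2.1.symm e.1.2, (Walk.cons_isPath_iff _ _).mpr ⟨e.1.2.2.1, e.2.2.2⟩,
      by simp [e.1.2.2.2]⟩
  have extend_injective : Function.Injective extend := by
    rintro ⟨⟨u, p, _⟩, ⟨x, _⟩⟩ ⟨⟨u', p', _⟩, ⟨x', _⟩⟩ h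
    obtain ⟨rfl, h⟩ := Sigma.mk.inj_iff.mp h
    obtain ⟨rfl, h⟩ := Walk.cons.inj (congrArg Subtype.val (eq_of_heq h))
    cases h
    rfl
  have card_extension : ∀ t, d ≤ Fintype.card (Extension t) := by
    rintro ⟨u, p, hp, hlen⟩
    rw [Fintype.card_subtype]
    calc d ≤ #(G.neighborFinset u) - 1 := by
          have := hdeg u; rw [card_neighborFinset_eq_degree]; omega
      _ ≤ #((G.neighborFinset u).erase p.snd) := pred_card_le_card_erase
      _ ≤ _ := card_le_card fun x hx => by
        obtain ⟨hne, hadj⟩ := mem_erase.mp hx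
        rw [mem_neighborFinset] at hadj
        refine mem_filter.mpr ⟨mem_univ _, hadj, fun hx => hne ?_⟩
        exact hp.eq_snd_of_adj_of_length_lt_egirth (by simpa [hlen] using hj) hadj hx
  calc d * Fintype.card (G.PathsTo v j) = ∑ _ : G.PathsTo v j, d := by simp [mul_comm]
    _ ≤ ∑ t, Fintype.card (Extension t) := sum_le_sum fun t _ => card_extension t
    _ = Fintype.card (Σ t, Extension t) := Fintype.card_sigma.symm
    _ ≤ _ := Fintype.card_le_of_injective extend extend_injective

theorem pow_le_card_pathsTo {d k : ℕ} (v : V) (hdeg : ∀ u, d < G.degree u)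
    (hk : (k : ℕ∞) < G.egirth) : ∀ j ≤ k, d ^ j ≤ Fintype.card (G.PathsTo v j)
  | 0, _ => Fintype.card_pos_iff.mpr ⟨⟨v, .nil, .nil, rfl⟩⟩
  | j + 1, hj => calc
      d ^ (j + 1) = d * d ^ j := pow_succ' d j
      _ ≤ d * Fintype.card (G.PathsTo v j) := by
        gcongr; exact pow_le_card_pathsTo v hdeg hk j (by omega)
      _ ≤ _ := mul_card_pathsTo_le_card_pathsTo_succ hdeg <|
        lt_of_le_of_lt (by exact_mod_cast hj) hk

theorem card_pathsTo_le_card {k : ℕ} (v : V) (hk : (2 * k : ℕ∞) < G.egirth) :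
    Fintype.card (G.PathsTo v k) ≤ Fintype.card V := by
  refine Fintype.card_le_of_injective Sigma.fst ?_
  rintro ⟨u, p, hp, hlen⟩ ⟨_, q, hq, hlen'⟩ (rfl : u = _)
  have := hp.eq_of_length_add_length_lt_egirth hq (by rw [hlen, hlen', ← two_mul]; exact hk)
  subst this
  rfl

theorem pow_le_card_of_lt_egirth [Nonempty V] {d k : ℕ} (hdeg : ∀ u, d < G.degree u)
    (hk : (2 * k : ℕ∞) < G.egirth) : d ^ k ≤ Fintype.card V := by
  obtain ⟨v⟩ := ‹Nonempty V›
  have hk' : (k : ℕ∞) < G.egirth := lt_of_le_of_lt (by norm_cast; omega) hk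
  exact (pow_le_card_pathsTo v hdeg hk' k le_rfl).trans (card_pathsTo_le_card v hk)

end PathCounting

section DenseCore
variable [DecidableEq V] [DecidableRel G.Adj]

theorem sum_card_filter_adj_eq_sum_erase_add {s : Finset V} {v : V} (hv : v ∈ s) :
    ∑ u ∈ s, #{x ∈ s | G.Adj u x} =
      ∑ u ∈ s.erase v, #{x ∈ s.erase v | G.Adj u x} + 2 * #{x ∈ s | G.Adj v x} := by
  simp only [card_filter]
  have hsplit : ∀ u ∈ s.erase v, ∑ x ∈ s, (if G.Adj u x then 1 else 0) =
      (if G.Adj u v then 1 else 0) + ∑ x ∈ s.erase v, if G.Adj u x then 1 else 0 :=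
    fun u _ => (add_sum_erase s _ hv).symm
  have hcol : ∑ u ∈ s.erase v, (if G.Adj u v then 1 else 0) =
      ∑ x ∈ s, if G.Adj v x then 1 else 0 := by
    rw [sum_erase _ (by simp)]
    simp_rw [G.adj_comm]
  rw [← add_sum_erase s _ hv, sum_congr rfl hsplit, sum_add_distrib, hcol]
  ring

theorem degree_induce_coe_finset [Fintype V] (s : Finset V) (v : (s : Set V)) :
    (G.induce s).degree v = #{x ∈ s | G.Adj v x} := by
  have := congrArg card (map_neighborFinset_induce (G := G) v)
  rw [card_map, card_neighborFinset_eq_degree] at this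
  convert this using 2
  ext x
  simp [and_comm]

theorem exists_forall_lt_degree_induce [Fintype V] {d : ℕ}
    (h : d * Fintype.card V < #G.edgeFinset) :
    ∃ s : Finset V, s.Nonempty ∧ ∀ v, d < (G.induce (s : Set V)).degree v := by
  suffices ∀ s : Finset V, 2 * d * #s < ∑ u ∈ s, #{x ∈ s | G.Adj u x} →
      ∃ t : Finset V, t.Nonempty ∧ ∀ v ∈ t, d < #{x ∈ t | G.Adj v x} by
    obtain ⟨t, ht, hdeg⟩ := this univ <| by
      have hdeg (u : V) : #{x ∈ univ | G.Adj u x} = G.degree u := by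
        rw [← card_neighborFinset_eq_degree, neighborFinset_eq_filter]
      simp_rw [hdeg, sum_degrees_eq_twice_card_edges, card_univ, mul_assoc]
      omega
    exact ⟨t, ht, fun v => by rw [degree_induce_coe_finset]; exact hdeg v v.2⟩
  intro s
  induction s using Finset.strongInduction with
  | H s ih =>
    intro hs
    by_cases hall : ∀ v ∈ s, d < #{x ∈ s | G.Adj v x}
    · refine ⟨s, nonempty_iff_ne_empty.mpr ?_, hall⟩
      rintro rfl
      simp at hs
    · push Not at hall
      obtain ⟨v, hv, hdv⟩ := hall
      refine ih _ (erase_ssubset hv) ?_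
      rw [sum_card_filter_adj_eq_sum_erase_add hv, ← card_erase_add_one hv, mul_add] at hs
      linarith

end DenseCore

end SimpleGraph

open SimpleGraph

/-- An undirected graph on `n ≥ 2` vertices with girth strictly greater than `2 log₂ n`
(every cycle has length `> 2 log₂ n`) has at most `4n` edges. -/
theorem stmt_3 {V : Type*} [Fintype V] (H : SimpleGraph V) [DecidableRel H.Adj]
    (hn : 2 ≤ Fintype.card V)
    (hgirth : ∀ (v : V) (c : H.Walk v v), c.IsCycle →
      2 * Real.logb 2 (Fintype.card V) < (c.length : ℝ)) :
    H.edgeFinset.card ≤ 4 * Fintype.card V := by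
  classical
  by_contra! hcard
  obtain ⟨s, hs, hdeg⟩ := exists_forall_lt_degree_induce hcard
  set n := Fintype.card V
  set k := Nat.log 2 n
  have hk : (2 * k : ℕ∞) < (H.induce (s : Set V)).egirth := by
    refine lt_of_lt_of_le ?_ (IsContained.egirth_le ⟨Copy.induce H s⟩)
    exact_mod_cast natCast_lt_egirth fun v c hc => by
      have := Real.natLog_le_logb n 2
      push_cast at this
      exact_mod_cast (show (2 * k : ℝ) < c.length by linarith [hgirth v c hc])
  have : Nonempty (s : Set V) := hs.to_subtype
  have hpow : 4 ^ k ≤ n := (pow_le_card_of_lt_egirth hdeg hk).trans <| by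
    simpa using s.card_le_univ
  have hlog : n < 2 ^ (k + 1) := Nat.lt_pow_succ_log_self one_lt_two n
  have hk1 : 1 ≤ k := Nat.log_pos one_lt_two hn
  have : 2 ^ (k + 1) ≤ 4 ^ k := by
    rw [show 4 = 2 ^ 2 by rfl, ← pow_mul]
    exact Nat.pow_le_pow_right two_pos (by omega)
  omega
end

section
/- Consider the greedy spanner process on a graph G = (V, E) with |V| = n: initialize H = (V, ∅); process edges (u,v) ∈ E in arbitrary order, adding (u,v) to H whenever the current distance between u and v in H (number of edges) exceeds 2 log₂ n. Then the resulting H has girth greater than 2 log₂ n, and for every edge (u,v) ∈ E, dist_H(u,v) ≤ 2 log₂ n (so H is a (2 log₂ n)-spanner of the unweighted graph G). -/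
open Classical in
/-- One step of the greedy spanner process: add the edge `(p.1, p.2)` to `H` iff the
current hop distance between its endpoints in `H` exceeds `2 log₂ n` (i.e., every walk
between them is longer than `2 log₂ n`; in particular if they are disconnected). -/
noncomputable def greedyStep {V : Type*} (n : ℕ) (H : SimpleGraph V) (p : V × V) :
    SimpleGraph V :=
  if ∀ w : H.Walk p.1 p.2, 2 * Real.logb 2 n < (w.length : ℝ) then
    H ⊔ SimpleGraph.fromEdgeSet {s(p.1, p.2)}
  else H

/-- The greedy spanner obtained by processing the list of edges `l` in order, starting
from the empty graph. -/
noncomputable def greedySpanner {V : Type*} (n : ℕ) (l : List (V × V)) : SimpleGraph V :=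
  l.foldl (greedyStep n) ⊥

/-!
The invariant of the process is that the current graph has girth greater than
`L = 2 log₂ n`. An edge `uv` is only added when every `u`–`v` walk is longer than `L`, and a
new cycle must run through `uv`; deleting `uv` from it leaves a `u`–`v` walk of the old graph,
so the cycle is longer than `L` as well. Every processed edge ends up at distance at most `L`:
either it was already that close, or it was added, and `L ≥ 1` as soon as `n ≥ 2`.
-/

namespace SimpleGraph.Walk

variable {V : Type*} {G : SimpleGraph V}

lemma IsCycle.exists_walk_snd {u : V} {c : G.Walk u u} (hc : c.IsCycle) :
    ∃ p : G.Walk u c.snd, p.length + 1 = c.length ∧ s(u, c.snd) ∉ p.edges := by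
  refine ⟨c.tail.reverse, by rw [length_reverse, length_tail_add_one hc.not_nil], ?_⟩
  have hnodup := hc.edges_nodup
  rw [← cons_tail_eq c hc.not_nil, edges_cons, List.nodup_cons] at hnodup
  simpa using hnodup.1

theorem IsCycle.exists_walk_of_mem_edges {a u v : V} {c : G.Walk a a} (hc : c.IsCycle)
    (he : s(u, v) ∈ c.edges) :
    ∃ p : G.Walk u v, p.length + 1 = c.length ∧ s(u, v) ∉ p.edges := by
  classical
  have hu : u ∈ c.support := c.fst_mem_support_of_mem_edges he
  set d := c.rotate u hu
  have hd : d.IsCycle := hc.rotate hu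
  have hv : v ∈ d.toSubgraph.neighborSet u := by
    rw [Subgraph.mem_neighborSet, adj_toSubgraph_iff_mem_edges, (c.rotate_edges u hu).mem_iff]
    exact he
  rw [hd.neighborSet_toSubgraph_endpoint, Set.mem_insert_iff, Set.mem_singleton_iff] at hv
  rcases hv with rfl | rfl
  · simpa [d] using hd.exists_walk_snd
  · rw [← snd_reverse]
    obtain ⟨p, hp, hne⟩ := hd.reverse.exists_walk_snd
    exact ⟨p, by simpa [d] using hp, hne⟩

end SimpleGraph.Walk

namespace SimpleGraph

variable {V : Type*}

/-- `H` has girth greater than `L`. -/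
def CyclesLongerThan (H : SimpleGraph V) (L : ℝ) : Prop :=
  ∀ (v : V) (c : H.Walk v v), c.IsCycle → L < c.length

lemma cyclesLongerThan_bot (L : ℝ) : (⊥ : SimpleGraph V).CyclesLongerThan L := by
  rintro v (_ | ⟨h, _⟩) hc
  · exact absurd rfl hc.ne_nil
  · exact absurd h (by simp)

lemma Walk.forall_mem_edgeSet_of_notMem_edges {H : SimpleGraph V} {e : Sym2 V} {x y : V}
    {w : (H ⊔ fromEdgeSet {e}).Walk x y} (he : e ∉ w.edges) :
    ∀ e' ∈ w.edges, e' ∈ H.edgeSet := by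
  intro e' he'
  have h := w.edges_subset_edgeSet he'
  rw [edgeSet_sup, edgeSet_fromEdgeSet] at h
  rcases h with h | ⟨rfl, -⟩
  · exact h
  · exact absurd he' he

theorem CyclesLongerThan.sup_fromEdgeSet {H : SimpleGraph V} {L : ℝ} {u v : V}
    (hH : H.CyclesLongerThan L) (huv : ∀ w : H.Walk u v, L < w.length) :
    (H ⊔ fromEdgeSet {s(u, v)}).CyclesLongerThan L := by
  intro a c hc
  by_cases he : s(u, v) ∈ c.edges
  · obtain ⟨p, hlen, hp⟩ := hc.exists_walk_of_mem_edges he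
    have := huv (p.transfer H (Walk.forall_mem_edgeSet_of_notMem_edges hp))
    rw [Walk.length_transfer] at this
    rw [← hlen]
    push_cast
    linarith
  · have hedges := Walk.forall_mem_edgeSet_of_notMem_edges he
    simpa using hH a (c.transfer H hedges) (hc.transfer hedges)

end SimpleGraph

open SimpleGraph

section GreedyStep

variable {V : Type*}

lemma le_greedyStep (n : ℕ) (H : SimpleGraph V) (p : V × V) : H ≤ greedyStep n H p := by
  unfold greedyStep
  split_ifs
  · exact le_sup_left
  · exact le_rfl

lemma greedyStep_le {n : ℕ} {H G : SimpleGraph V} {p : V × V} (hH : H ≤ G)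
    (hp : G.Adj p.1 p.2) : greedyStep n H p ≤ G := by
  unfold greedyStep
  split_ifs
  · refine sup_le hH fun a b hab => ?_
    rw [fromEdgeSet_adj, Set.mem_singleton_iff, Sym2.eq_iff] at hab
    rcases hab.1 with ⟨rfl, rfl⟩ | ⟨rfl, rfl⟩
    · exact hp
    · exact hp.symm
  · exact hH

lemma cyclesLongerThan_greedyStep {n : ℕ} {H : SimpleGraph V}
    (hH : H.CyclesLongerThan (2 * Real.logb 2 n)) (p : V × V) :
    (greedyStep n H p).CyclesLongerThan (2 * Real.logb 2 n) := by
  unfold greedyStep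
  split_ifs with hp
  · exact hH.sup_fromEdgeSet hp
  · exact hH

lemma exists_walk_greedyStep_length_le {n : ℕ} (H : SimpleGraph V) {p : V × V}
    (hp : p.1 ≠ p.2) (hn : 1 ≤ 2 * Real.logb 2 n) :
    ∃ w : (greedyStep n H p).Walk p.1 p.2, w.length ≤ 2 * Real.logb 2 n := by
  by_cases hfar : ∀ w : H.Walk p.1 p.2, 2 * Real.logb 2 n < (w.length : ℝ)
  · rw [greedyStep, if_pos hfar]
    have hadj : (H ⊔ fromEdgeSet {s(p.1, p.2)}).Adj p.1 p.2 := Or.inr ⟨rfl, hp⟩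
    exact ⟨hadj.toWalk, by simpa using hn⟩
  · rw [greedyStep, if_neg hfar]
    push Not at hfar
    exact hfar

lemma le_foldl_greedyStep (n : ℕ) (H : SimpleGraph V) (l : List (V × V)) :
    H ≤ l.foldl (greedyStep n) H := by
  induction l generalizing H with
  | nil => exact le_rfl
  | cons p l ih => exact (le_greedyStep n H p).trans (ih _)

lemma foldl_greedyStep_le {n : ℕ} {H G : SimpleGraph V} {l : List (V × V)} (hH : H ≤ G)
    (hl : ∀ p ∈ l, G.Adj p.1 p.2) : l.foldl (greedyStep n) H ≤ G := by
  induction l generalizing H with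
  | nil => exact hH
  | cons p l ih =>
    exact ih (greedyStep_le hH (hl p List.mem_cons_self)) fun q hq => hl q (.tail p hq)

lemma cyclesLongerThan_foldl_greedyStep {n : ℕ} {H : SimpleGraph V}
    (hH : H.CyclesLongerThan (2 * Real.logb 2 n)) (l : List (V × V)) :
    (l.foldl (greedyStep n) H).CyclesLongerThan (2 * Real.logb 2 n) := by
  induction l generalizing H with
  | nil => exact hH
  | cons p l ih => exact ih (cyclesLongerThan_greedyStep hH p)

lemma exists_walk_foldl_greedyStep_length_le {n : ℕ} (H : SimpleGraph V) {l : List (V × V)}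
    {p : V × V} (hpl : p ∈ l) (hp : p.1 ≠ p.2) (hn : 1 ≤ 2 * Real.logb 2 n) :
    ∃ w : (l.foldl (greedyStep n) H).Walk p.1 p.2, w.length ≤ 2 * Real.logb 2 n := by
  induction l generalizing H with
  | nil => simp at hpl
  | cons q l ih =>
    rcases List.mem_cons.mp hpl with rfl | hpl
    · obtain ⟨w, hw⟩ := exists_walk_greedyStep_length_le H hp hn
      exact ⟨w.mapLe (le_foldl_greedyStep n _ l), by simpa using hw⟩
    · exact ih _ hpl

lemma one_le_two_mul_logb_two {n : ℕ} (hn : 2 ≤ n) : 1 ≤ 2 * Real.logb 2 n := by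
  have : 1 ≤ Real.logb 2 n := by
    rw [Real.le_logb_iff_rpow_le one_lt_two (by positivity)]
    exact_mod_cast hn
  linarith

end GreedyStep

/-- The greedy spanner process on `G` (processing all edges of `G` in an arbitrary order)
produces a subgraph `H ≤ G` of girth greater than `2 log₂ n` in which every edge `(u,v)`
of `G` has hop distance at most `2 log₂ n`, i.e. a `(2 log₂ n)`-spanner of `G`. -/
theorem stmt_4 {V : Type*} [Fintype V] (G : SimpleGraph V) (l : List (V × V))
    (hl : ∀ p ∈ l, G.Adj p.1 p.2)
    (hcover : ∀ u v, G.Adj u v → (u, v) ∈ l ∨ (v, u) ∈ l) :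
    greedySpanner (Fintype.card V) l ≤ G ∧
    (∀ (v : V) (c : (greedySpanner (Fintype.card V) l).Walk v v), c.IsCycle →
      2 * Real.logb 2 (Fintype.card V) < (c.length : ℝ)) ∧
    (∀ u v, G.Adj u v → ∃ w : (greedySpanner (Fintype.card V) l).Walk u v,
      (w.length : ℝ) ≤ 2 * Real.logb 2 (Fintype.card V)) := by
  unfold greedySpanner
  refine ⟨foldl_greedyStep_le bot_le hl,
    cyclesLongerThan_foldl_greedyStep (cyclesLongerThan_bot _) l, fun u v huv => ?_⟩
  have hn := one_le_two_mul_logb_two (Fintype.one_lt_card_iff_nontrivial.mpr ⟨u, v, huv.ne⟩)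
  rcases hcover u v huv with huv' | hvu
  · exact exists_walk_foldl_greedyStep_length_le ⊥ huv' huv.ne hn
  · obtain ⟨w, hw⟩ := exists_walk_foldl_greedyStep_length_le ⊥ hvu huv.ne.symm hn
    exact ⟨w.reverse, by simpa using hw⟩
end

section
/- Let G be a directed graph with m edges, let 0 < δ ≤ 1/(20 m²), and let f ∈ R^{E(G)} be a circulation (flow conservation at every vertex) with −δ ≤ f(e) ≤ 1 for all edges e. Then every edge e with f(e) ≥ 1/(10m) lies inside a strongly connected component of G (i.e., both its endpoints are in the same SCC). -/
open BigOperators Finset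

/-!
Suppose `s e₀` is not reachable from `t e₀`, and let `S` be the set of vertices reachable from
`t e₀`. No edge leaves `S`, so flow conservation summed over `S` says that the flows on the edges
entering `S` sum to zero. One of them is `e₀`, and each of the others carries at least `-δ`, so
`f e₀ ≤ (m - 1) δ < 1 / (20 m)`, contradicting `f e₀ ≥ 1 / (10 m)`.
-/

theorem Finset.le_card_sub_one_nsmul_of_sum_eq_zero {ι α : Type*} [DecidableEq ι]
    [AddCommGroup α] [PartialOrder α] [IsOrderedAddMonoid α] {s : Finset ι} {f : ι → α} {δ : α}
    (hsum : ∑ i ∈ s, f i = 0) (hlow : ∀ i ∈ s, -δ ≤ f i) {i : ι} (hi : i ∈ s) :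
    f i ≤ (s.card - 1) • δ := by
  rw [← Finset.add_sum_erase s f hi, add_eq_zero_iff_eq_neg, ← Finset.sum_neg_distrib] at hsum
  calc f i = ∑ j ∈ s.erase i, -f j := hsum
    _ ≤ ∑ _j ∈ s.erase i, δ :=
      Finset.sum_le_sum fun j hj => neg_le.mp (hlow j (Finset.mem_of_mem_erase hj))
    _ = (s.card - 1) • δ := by rw [Finset.sum_const, Finset.card_erase_of_mem hi]

namespace DirectedGraph

variable {V E M : Type*} [Fintype E] [DecidableEq V] {s t : E → V}

def IsCirculation [AddCommMonoid M] (s t : E → V) (f : E → M) : Prop :=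
  ∀ v : V, (∑ e, if t e = v then f e else 0) = ∑ e, if s e = v then f e else 0

theorem sum_ite_mem_eq_sum_sum_ite_eq [AddCommMonoid M] {f : E → M} (g : E → V) (S : Finset V) :
    (∑ e, if g e ∈ S then f e else 0) = ∑ v ∈ S, ∑ e, if g e = v then f e else 0 := by
  rw [Finset.sum_comm]
  exact Finset.sum_congr rfl fun e _ => (Finset.sum_ite_eq S (g e) fun _ => f e).symm

theorem IsCirculation.sum_target_mem_eq_sum_source_mem [AddCommMonoid M] {f : E → M}
    (hf : IsCirculation s t f) (S : Finset V) :
    ∑ e with t e ∈ S, f e = ∑ e with s e ∈ S, f e := by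
  simp only [Finset.sum_filter, sum_ite_mem_eq_sum_sum_ite_eq]
  exact Finset.sum_congr rfl fun v _ => hf v

theorem IsCirculation.sum_entering_eq_zero [AddCancelCommMonoid M] {f : E → M}
    (hf : IsCirculation s t f) {S : Finset V} (hS : ∀ e, s e ∈ S → t e ∈ S) :
    ∑ e with t e ∈ S ∧ s e ∉ S, f e = 0 := by
  have hin : ∑ e with t e ∈ S, f e
      = ∑ e with t e ∈ S ∧ s e ∈ S, f e + ∑ e with t e ∈ S ∧ s e ∉ S, f e := by
    rw [← Finset.filter_filter, ← Finset.filter_filter,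
      Finset.sum_filter_add_sum_filter_not]
  have hout : ∑ e with s e ∈ S, f e = ∑ e with t e ∈ S ∧ s e ∈ S, f e :=
    Finset.sum_congr (Finset.filter_congr fun e _ => ⟨fun h => ⟨hS e h, h⟩, And.right⟩)
      fun _ _ => rfl
  rw [← add_eq_left (a := ∑ e with t e ∈ S ∧ s e ∈ S, f e), ← hin, ← hout,
    hf.sum_target_mem_eq_sum_source_mem]

theorem IsCirculation.le_of_mem_entering {f : E → ℝ} {δ : ℝ} (hf : IsCirculation s t f)
    (hδ : 0 ≤ δ) (hlow : ∀ e, -δ ≤ f e) {S : Finset V} (hS : ∀ e, s e ∈ S → t e ∈ S)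
    {e₀ : E} (hin : t e₀ ∈ S) (hout : s e₀ ∉ S) :
    f e₀ ≤ (Fintype.card E - 1 : ℝ) * δ := by
  classical
  have hmem : e₀ ∈ ({e | t e ∈ S ∧ s e ∉ S} : Finset E) := by simp [hin, hout]
  have hcard : (#{e | t e ∈ S ∧ s e ∉ S} : ℝ) ≤ Fintype.card E := by
    exact_mod_cast Finset.card_le_univ _
  calc f e₀ ≤ (#{e | t e ∈ S ∧ s e ∉ S} - 1) • δ :=
        Finset.le_card_sub_one_nsmul_of_sum_eq_zero (hf.sum_entering_eq_zero hS)
          (fun e _ => hlow e) hmem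
    _ = (#{e | t e ∈ S ∧ s e ∉ S} - 1 : ℝ) * δ := by
        rw [nsmul_eq_mul, Nat.cast_pred (Finset.card_pos.mpr ⟨e₀, hmem⟩)]
    _ ≤ (Fintype.card E - 1 : ℝ) * δ := by gcongr

end DirectedGraph

theorem sub_one_mul_lt_one_div_ten_mul {m δ : ℝ} (hm : 1 ≤ m) (hδ : δ ≤ 1 / (20 * m ^ 2)) :
    (m - 1) * δ < 1 / (10 * m) := by
  have hm0 : 0 < m := by linarith
  calc (m - 1) * δ ≤ (m - 1) * (1 / (20 * m ^ 2)) := by gcongr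
    _ ≤ m * (1 / (20 * m ^ 2)) := by gcongr; linarith
    _ = 1 / (20 * m) := by field_simp
    _ < 1 / (10 * m) := by gcongr; norm_num

theorem stmt_6_general {V E : Type*} [Fintype V] [Fintype E] [DecidableEq V]
    (s t : E → V) (f : E → ℝ) (δ : ℝ)
    (hδpos : 0 < δ) (hδ : δ ≤ 1 / (20 * (Fintype.card E : ℝ) ^ 2))
    (hcirc : ∀ v : V, (∑ e, if t e = v then f e else 0) = ∑ e, if s e = v then f e else 0)
    (hlow : ∀ e, -δ ≤ f e)
    (e₀ : E) (hf : 1 / (10 * (Fintype.card E : ℝ)) ≤ f e₀) :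
    Relation.ReflTransGen (fun a b => ∃ e, s e = a ∧ t e = b) (s e₀) (t e₀) ∧
    Relation.ReflTransGen (fun a b => ∃ e, s e = a ∧ t e = b) (t e₀) (s e₀) := by
  classical
  refine ⟨.single ⟨e₀, rfl, rfl⟩, ?_⟩
  by_contra hback
  let S : Finset V := {v | Relation.ReflTransGen (fun a b => ∃ e, s e = a ∧ t e = b) (t e₀) v}
  have hS : ∀ e, s e ∈ S → t e ∈ S := by
    intro e he
    simp only [S, Finset.mem_filter_univ] at he ⊢
    exact he.tail ⟨e, rfl, rfl⟩
  have hbound := DirectedGraph.IsCirculation.le_of_mem_entering hcirc hδpos.le hlow hS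
    (e₀ := e₀) ((Finset.mem_filter_univ _).mpr .refl) (by simpa [S] using hback)
  have hm : (1 : ℝ) ≤ Fintype.card E := by exact_mod_cast Fintype.card_pos_iff.mpr ⟨e₀⟩
  linarith [sub_one_mul_lt_one_div_ten_mul hm hδ]

/-- Let `G` be a directed graph with `m` edges (edges `e` with source `s e` and target
`t e`), `0 < δ ≤ 1/(20 m²)`, and `f` a circulation with `−δ ≤ f(e) ≤ 1` for all `e`.
Then every edge `e₀` with `f(e₀) ≥ 1/(10 m)` lies inside a strongly connected component:
its endpoints are mutually reachable. -/
theorem stmt_6 {V E : Type*} [Fintype V] [Fintype E] [DecidableEq V]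
    (s t : E → V) (f : E → ℝ) (δ : ℝ)
    (hδpos : 0 < δ) (hδ : δ ≤ 1 / (20 * (Fintype.card E : ℝ) ^ 2))
    (hcirc : ∀ v : V, (∑ e, if t e = v then f e else 0) = ∑ e, if s e = v then f e else 0)
    (hlow : ∀ e, -δ ≤ f e) (hup : ∀ e, f e ≤ 1)
    (e₀ : E) (hf : 1 / (10 * (Fintype.card E : ℝ)) ≤ f e₀) :
    Relation.ReflTransGen (fun a b => ∃ e, s e = a ∧ t e = b) (s e₀) (t e₀) ∧
    Relation.ReflTransGen (fun a b => ∃ e, s e = a ∧ t e = b) (t e₀) (s e₀) :=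
  stmt_6_general s t f δ hδpos hδ hcirc hlow e₀ hf
end

section
/- Let f be a routing circulation on the abstracted hierarchical routing graph H̃^e with κ layers, where edges between layer i and layer i+1 have length γ·D^i with D ≥ 2. Then f can be written as f = Σ_{i=1}^k c_i where each c_i is a circulation supported on a single monotone cycle (a simple cycle composed of one monotonically layer-increasing path, one monotonically layer-decreasing path, and optionally the extra edge e), and Σ_{i=1}^k ‖L̃ c_i‖₁ ≤ 4κ ‖L̃ f‖₁. -/
open BigOperators

/-- The indicator flow of a path given as a list of edges. -/
def pathInd {E : Type*} [DecidableEq E] (l : List E) : E → ℝ := fun e => (l.count e : ℝ)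

/-- `l` is a nonempty edge-path starting at vertex `w` (edges chained head-to-tail). -/
def IsPathFrom {W E : Type*} (s t : E → W) (w : W) (l : List E) : Prop :=
  l ≠ [] ∧ l.Chain' (fun a b => t a = s b) ∧ ∀ a ∈ l.head?, s a = w

/-- Net flow at vertex `w` of a flow `F = (edge flows, flow on the extra edge u→v)`. -/
def net {W E : Type*} [Fintype E] [DecidableEq W] (s t : E → W) (u v : W)
    (F : (E → ℝ) × ℝ) (w : W) : ℝ :=
  (∑ e, if t e = w then F.1 e else 0) - (∑ e, if s e = w then F.1 e else 0)
    + (if w = v then F.2 else 0) - (if w = u then F.2 else 0)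

/-- `F` is a circulation on the abstracted HRG with extra edge `u→v`. -/
def IsCirc {W E : Type*} [Fintype E] [DecidableEq W] (s t : E → W) (u v : W)
    (F : (E → ℝ) × ℝ) : Prop :=
  ∀ w, net s t u v F w = 0

/-- `F` is a routing circulation: a circulation composed of flow on the extra edge plus a
sum of monotonically increasing path flows starting at the endpoints `u` and `v` of the
extra edge, where all paths from `v` carry flow of one sign and all paths from `u` flow
of the other sign. -/
def IsRoutingCirc {W E : Type*} [Fintype E] [DecidableEq W] [DecidableEq E]
    (s t : E → W) (u v : W) (F : (E → ℝ) × ℝ) : Prop :=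
  IsCirc s t u v F ∧ ∃ ε : ℝ, (ε = 1 ∨ ε = -1) ∧
    ∃ (n₁ n₂ : ℕ) (Pv : Fin n₁ → List E) (μv : Fin n₁ → ℝ)
      (Pu : Fin n₂ → List E) (μu : Fin n₂ → ℝ),
      (∀ i, IsPathFrom s t v (Pv i) ∧ 0 < ε * μv i) ∧
      (∀ i, IsPathFrom s t u (Pu i) ∧ ε * μu i < 0) ∧
      F.1 = fun e => (∑ i, μv i * pathInd (Pv i) e) + (∑ i, μu i * pathInd (Pu i) e)

/-- `c` is a circulation supported on a single monotone cycle: a simple cycle composed of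
a monotonically (layer-)increasing path `P`, a monotonically decreasing path (the reverse
of the increasing path `Q`), and optionally the extra edge. -/
def IsMonotoneCycle {W E : Type*} [Fintype E] [DecidableEq W] [DecidableEq E]
    (s t : E → W) (u v : W) (c : (E → ℝ) × ℝ) : Prop :=
  IsCirc s t u v c ∧ ∃ (μ : ℝ) (P Q : List E),
    P.Chain' (fun a b => t a = s b) ∧ Q.Chain' (fun a b => t a = s b) ∧
    P.Nodup ∧ Q.Nodup ∧ (∀ a ∈ P, a ∉ Q) ∧
    c.1 = (fun e => μ * (pathInd P e - pathInd Q e)) ∧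
    (c.2 = μ ∨ c.2 = -μ ∨ c.2 = 0)

/-!
Fix for every vertex reachable from `v` (or else from `u`) a monotone tree path from that root.
Each edge `e` closes a fundamental cycle: up the tree to `s e`, across `e`, down the tree from
`t e`, and over the extra edge when the two roots differ. Since `F` is a circulation and the roots
have empty tree paths, `F` telescopes into `∑ₑ F e • (fundamental cycle of e)` plus a multiple of
the extra edge. As edge lengths grow by a factor `D ≥ 2` per layer, the two tree paths at `e` are
at most three times as long as `e`, and cancelling common edges splits a fundamental cycle into
monotone cycles without making it longer: this gives the factor 4 on the edges. The flow the
fundamental cycles put on the extra edge is at most `∑ₑ |F e| ≤ 2κ |F.2|`, because the routing paths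
from `u` and from `v` each carry total mass `|F.2|` and have fewer than `κ` edges.
-/

open Finset

section

variable {W E : Type*}

section Paths

variable (s t : E → W)

inductive IsPath : W → W → List E → Prop
  | nil (a : W) : IsPath a a []
  | cons {a b : W} {e : E} {l : List E} : s e = a → IsPath (t e) b l → IsPath a b (e :: l)

def Reachable (a x : W) : Prop := ∃ l, IsPath s t a x l

variable {s t}

namespace IsPath

theorem nil_iff {a b : W} : IsPath s t a b [] ↔ a = b :=
  ⟨fun h => by cases h; rfl, fun h => h ▸ nil a⟩

theorem cons_iff {a b : W} {e : E} {l : List E} :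
    IsPath s t a b (e :: l) ↔ s e = a ∧ IsPath s t (t e) b l :=
  ⟨fun h => by cases h with | cons h₁ h₂ => exact ⟨h₁, h₂⟩, fun h => cons h.1 h.2⟩

theorem append_cons {a b : W} {e : E} {l₁ l₂ : List E} (h : IsPath s t a b (l₁ ++ e :: l₂)) :
    IsPath s t a (s e) l₁ ∧ IsPath s t (t e) b l₂ := by
  induction l₁ generalizing a with
  | nil =>
    obtain ⟨rfl, hl₂⟩ := cons_iff.1 h
    exact ⟨nil _, hl₂⟩
  | cons f l₁ ih =>
    obtain ⟨rfl, hl⟩ := cons_iff.1 h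
    exact ⟨cons rfl (ih hl).1, (ih hl).2⟩

theorem concat {a b : W} {e : E} {l : List E} (h : IsPath s t a b l) (he : s e = b) :
    IsPath s t a (t e) (l ++ [e]) := by
  induction h with
  | nil => exact cons he (nil _)
  | cons h₁ _ ih => exact cons h₁ (ih he)

theorem isChain {a b : W} {l : List E} (h : IsPath s t a b l) :
    l.IsChain (fun e f => t e = s f) := by
  induction h with
  | nil => exact List.isChain_nil
  | cons _ h ih =>
    refine List.isChain_cons.2 ⟨fun f hf => ?_, ih⟩
    cases h with
    | nil => simp at hf
    | cons h' _ => obtain rfl := Option.mem_some_iff.1 hf; exact h'.symm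

theorem exists_of_isChain {a : W} : ∀ {l : List E}, l.IsChain (fun e f => t e = s f) →
    (∀ e ∈ l.head?, s e = a) → ∃ b, IsPath s t a b l
  | [], _, _ => ⟨a, nil a⟩
  | e :: _, hc, hh => by
    obtain ⟨hhead, htail⟩ := List.isChain_cons.1 hc
    obtain ⟨b, hb⟩ := exists_of_isChain (a := t e) htail fun f hf => (hhead f hf).symm
    exact ⟨b, cons (hh e rfl) hb⟩

theorem sum_map_sub (ρ : W → ℝ) {a b : W} {l : List E} (h : IsPath s t a b l) :
    (l.map fun e => ρ (t e) - ρ (s e)).sum = ρ b - ρ a := by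
  induction h with
  | nil => simp
  | cons h₁ _ ih => rw [List.map_cons, List.sum_cons, ih, h₁]; ring

section Layered

variable {layer : W → ℕ} (hup : ∀ e, layer (t e) = layer (s e) + 1)
include hup

theorem layer_eq {a b : W} {l : List E} (h : IsPath s t a b l) :
    layer b = layer a + l.length := by
  induction h with
  | nil => rfl
  | cons h₁ _ ih => rw [ih, hup, h₁, List.length_cons]; ring

theorem eq_of_layer_eq {a b : W} {l : List E} (h : IsPath s t a b l) (hab : layer a = layer b) :
    l = [] ∧ a = b := by
  have hl : l = [] := List.eq_nil_of_length_eq_zero (by have := h.layer_eq hup; omega)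
  subst hl
  exact ⟨rfl, nil_iff.1 h⟩

theorem layer_le_of_mem {a b : W} {l : List E} (h : IsPath s t a b l) {e : E} (he : e ∈ l) :
    layer a ≤ layer (s e) := by
  induction h with
  | nil => simp at he
  | cons h₁ _ ih =>
    rcases List.mem_cons.1 he with rfl | he
    · rw [h₁]
    · have := ih he; rw [hup, h₁] at this; omega

theorem nodup {a b : W} {l : List E} (h : IsPath s t a b l) : l.Nodup := by
  induction h with
  | nil => exact List.nodup_nil
  | cons h₁ h ih =>
    refine List.nodup_cons.2 ⟨fun he => ?_, ih⟩
    have := h.layer_le_of_mem hup he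
    rw [hup] at this
    omega

theorem sub_one_mul_sum_len {γ D : ℝ} {len : E → ℝ} (hlen : ∀ e, len e = γ * D ^ layer (s e))
    {a b : W} {l : List E} (h : IsPath s t a b l) :
    (D - 1) * (l.map len).sum = γ * (D ^ layer b - D ^ layer a) := by
  induction h with
  | nil => simp
  | cons h₁ _ ih => rw [List.map_cons, List.sum_cons, mul_add, ih, hlen, hup, h₁, pow_succ]; ring

theorem sum_len_add_le {γ D : ℝ} (hγ : 0 < γ) (hD : 2 ≤ D)
    {len : E → ℝ} (hlen : ∀ e, len e = γ * D ^ layer (s e)) {a b : W} {e : E} {P Q : List E}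
    (hP : IsPath s t a (s e) P) (hQ : IsPath s t b (t e) Q) (ha : layer a = 0)
    (hb : layer b = 0) : (P.map len).sum + len e + (Q.map len).sum ≤ 4 * len e := by
  have hP' := hP.sub_one_mul_sum_len hup hlen
  have hQ' := hQ.sub_one_mul_sum_len hup hlen
  rw [ha, pow_zero] at hP'
  rw [hb, pow_zero, hup, pow_succ] at hQ'
  rw [hlen]
  have hX : 1 ≤ D ^ layer (s e) := one_le_pow₀ (by linarith)
  refine le_of_mul_le_mul_left ?_ (by linarith : (0 : ℝ) < D - 1)
  nlinarith [mul_le_mul_of_nonneg_left hX hγ.le]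

end Layered

end IsPath

theorem Reachable.concat {a : W} {e : E} (h : Reachable s t a (s e)) : Reachable s t a (t e) :=
  let ⟨_, hl⟩ := h
  ⟨_, hl.concat rfl⟩

theorem IsPathFrom.exists_isPath {a : W} {l : List E} (h : IsPathFrom s t a l) :
    ∃ b, IsPath s t a b l :=
  IsPath.exists_of_isChain h.2.1 h.2.2

theorem IsPathFrom.length_le {layer : W → ℕ} (hup : ∀ e, layer (t e) = layer (s e) + 1) {κ : ℕ}
    (hκ : ∀ w, layer w < κ) {a : W} {l : List E} (h : IsPathFrom s t a l) : l.length ≤ κ := by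
  obtain ⟨b, hb⟩ := h.exists_isPath
  have := hb.layer_eq hup
  have := hκ b
  omega

end Paths

section Circulations

variable [Fintype E] [DecidableEq W] {s t : E → W} {u v : W}

theorem sum_mul_net [Fintype W] (F : (E → ℝ) × ℝ) (ρ : W → ℝ) :
    ∑ w, ρ w * net s t u v F w = ∑ e, F.1 e * (ρ (t e) - ρ (s e)) + F.2 * (ρ v - ρ u) := by
  have hswap : ∀ g : E → W, ∑ w, ρ w * ∑ e, (if g e = w then F.1 e else 0)
      = ∑ e, F.1 e * ρ (g e) := fun g => by
    simp_rw [Finset.mul_sum, mul_ite, mul_zero]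
    rw [sum_comm]
    simp [mul_comm]
  simp only [net, mul_add, mul_sub, sum_add_distrib, sum_sub_distrib, hswap, mul_ite, mul_zero,
    sum_ite_eq', mem_univ, if_true]
  ring

theorem isCirc_iff [Fintype W] {F : (E → ℝ) × ℝ} : IsCirc s t u v F ↔
    ∀ ρ : W → ℝ, ∑ e, F.1 e * (ρ (t e) - ρ (s e)) + F.2 * (ρ v - ρ u) = 0 := by
  refine ⟨fun hF ρ => by simp [← sum_mul_net, hF _], fun h w => ?_⟩
  simpa using (sum_mul_net F fun x => if x = w then 1 else 0).trans
    (h fun x => if x = w then 1 else 0)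

theorem IsCirc.sum_mul_sub [Fintype W] {F : (E → ℝ) × ℝ} (hF : IsCirc s t u v F) (ρ : W → ℝ) :
    ∑ e, F.1 e * (ρ (s e) - ρ (t e)) = F.2 * (ρ v - ρ u) := by
  have := isCirc_iff.1 hF ρ
  simp only [mul_sub, sum_sub_distrib] at this ⊢
  linarith

end Circulations

section PathFlows

variable [DecidableEq E]

theorem pathInd_append (l₁ l₂ : List E) : pathInd (l₁ ++ l₂) = pathInd l₁ + pathInd l₂ := by
  funext e; simp [pathInd]

theorem sum_pathInd_mul [Fintype E] (l : List E) (g : E → ℝ) :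
    ∑ e, pathInd l e * g e = (l.map g).sum := by
  induction l with
  | nil => simp [pathInd]
  | cons f l ih =>
    simp only [pathInd, List.count_cons, beq_iff_eq, Nat.cast_add, Nat.cast_ite, Nat.cast_one,
      Nat.cast_zero, add_mul, ite_mul, one_mul, zero_mul, sum_add_distrib, sum_ite_eq,
      mem_univ, if_true, List.map_cons, List.sum_cons] at ih ⊢
    rw [ih, add_comm]

theorem sum_pathInd [Fintype E] (l : List E) : ∑ e, pathInd l e = l.length := by
  simpa using sum_pathInd_mul l fun _ => 1

end PathFlows

section CycleDecomposition

variable [DecidableEq E]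

def pairFlow (μ c : ℝ) (P Q : List E) : (E → ℝ) × ℝ := (μ • (pathInd P - pathInd Q), c)

theorem pairFlow_append_cons (μ c : ℝ) (P₁ P₂ Q₁ Q₂ : List E) (e : E) :
    pairFlow μ c (P₁ ++ e :: P₂) (Q₁ ++ e :: Q₂) = pairFlow μ c P₁ Q₁ + pairFlow μ 0 P₂ Q₂ := by
  have split : ∀ l₁ l₂ : List E, pathInd (l₁ ++ e :: l₂) = pathInd l₁ + pathInd [e] + pathInd l₂ :=
    fun l₁ l₂ => by
      rw [← pathInd_append, ← pathInd_append, List.append_assoc, List.singleton_append]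
  simp only [pairFlow, split, Prod.mk_add_mk, add_zero, ← smul_add]
  congr 2
  abel

/-- Paths `a₁ → x` and `a₂ → x`, together with flow `c` on the extra edge `u → v`, close up to a
circulation. -/
def IsClosing (u v a₁ a₂ : W) (μ c : ℝ) : Prop :=
  (a₁ = a₂ ∧ c = 0) ∨ (a₁ = v ∧ a₂ = u ∧ c = μ) ∨ (a₁ = u ∧ a₂ = v ∧ c = -μ)

variable [Fintype E]

def cost (len : E → ℝ) (le : ℝ) (c : (E → ℝ) × ℝ) : ℝ := ∑ e, len e * |c.1 e| + le * |c.2|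

theorem cost_pairFlow_le {len : E → ℝ} (hlen : ∀ e, 0 ≤ len e) (le μ c : ℝ) (P Q : List E) :
    cost len le (pairFlow μ c P Q) ≤ |μ| * ((P.map len).sum + (Q.map len).sum) + le * |c| := by
  rw [← sum_pathInd_mul, ← sum_pathInd_mul, ← sum_add_distrib, mul_sum]
  refine add_le_add_left (sum_le_sum fun e _ => ?_) _
  have hP : 0 ≤ pathInd P e := Nat.cast_nonneg _
  have hQ : 0 ≤ pathInd Q e := Nat.cast_nonneg _
  calc len e * |μ * (pathInd P e - pathInd Q e)|
      = |μ| * (len e * |pathInd P e - pathInd Q e|) := by rw [abs_mul]; ring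
    _ ≤ |μ| * (len e * (pathInd P e + pathInd Q e)) := by
      have : |pathInd P e - pathInd Q e| ≤ pathInd P e + pathInd Q e := by
        rw [abs_le]; constructor <;> linarith
      have := hlen e
      gcongr
    _ = _ := by ring

variable [DecidableEq W] (s t : E → W) (u v : W)

def HasCycleDecomp (len : E → ℝ) (le : ℝ) (c : (E → ℝ) × ℝ) (B : ℝ) : Prop :=
  ∃ cs : List ((E → ℝ) × ℝ),
    (∀ d ∈ cs, IsMonotoneCycle s t u v d) ∧ cs.sum = c ∧ (cs.map (cost len le)).sum ≤ B

variable {s t u v} {len : E → ℝ} {le : ℝ}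

namespace HasCycleDecomp

theorem zero : HasCycleDecomp s t u v len le 0 0 := ⟨[], by simp, rfl, le_rfl⟩

theorem of_isMonotoneCycle {c : (E → ℝ) × ℝ} (hc : IsMonotoneCycle s t u v c) :
    HasCycleDecomp s t u v len le c (cost len le c) :=
  ⟨[c], by simpa using hc, by simp, by simp⟩

theorem mono {c : (E → ℝ) × ℝ} {B B' : ℝ} (h : HasCycleDecomp s t u v len le c B) (hB : B ≤ B') :
    HasCycleDecomp s t u v len le c B' :=
  let ⟨cs, hcs, hsum, hcost⟩ := h
  ⟨cs, hcs, hsum, hcost.trans hB⟩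

theorem add {c c' : (E → ℝ) × ℝ} {B B' : ℝ} (h : HasCycleDecomp s t u v len le c B)
    (h' : HasCycleDecomp s t u v len le c' B') :
    HasCycleDecomp s t u v len le (c + c') (B + B') := by
  obtain ⟨cs, hcs, rfl, hcost⟩ := h
  obtain ⟨cs', hcs', rfl, hcost'⟩ := h'
  refine ⟨cs ++ cs', fun d hd => ?_, List.sum_append, ?_⟩
  · rcases List.mem_append.1 hd with hd | hd
    exacts [hcs d hd, hcs' d hd]
  · rw [List.map_append, List.sum_append]
    exact add_le_add hcost hcost'

theorem sum {ι : Type*} (S : Finset ι) {c : ι → (E → ℝ) × ℝ} {B : ι → ℝ}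
    (h : ∀ i ∈ S, HasCycleDecomp s t u v len le (c i) (B i)) :
    HasCycleDecomp s t u v len le (∑ i ∈ S, c i) (∑ i ∈ S, B i) := by
  classical
  induction S using Finset.induction_on with
  | empty => exact zero
  | insert i S hi ih =>
    rw [sum_insert hi, sum_insert hi]
    exact (h i (mem_insert_self i S)).add (ih fun j hj => h j (mem_insert_of_mem hj))

end HasCycleDecomp

theorem isCirc_pairFlow [Fintype W] {a₁ a₂ x : W} {P Q : List E} (hP : IsPath s t a₁ x P)
    (hQ : IsPath s t a₂ x Q) {μ c : ℝ} (hc : IsClosing u v a₁ a₂ μ c) :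
    IsCirc s t u v (pairFlow μ c P Q) := by
  refine isCirc_iff.2 fun ρ => ?_
  have hpair : ∑ e, (pairFlow μ c P Q).1 e * (ρ (t e) - ρ (s e))
      = μ * (∑ e, pathInd P e * (ρ (t e) - ρ (s e)) - ∑ e, pathInd Q e * (ρ (t e) - ρ (s e))) := by
    rw [mul_sub, mul_sum, mul_sum, ← sum_sub_distrib]
    refine sum_congr rfl fun e _ => ?_
    simp only [pairFlow, Pi.smul_apply, Pi.sub_apply, smul_eq_mul]
    ring
  rw [hpair, sum_pathInd_mul, sum_pathInd_mul, hP.sum_map_sub, hQ.sum_map_sub]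
  rcases hc with ⟨rfl, rfl⟩ | ⟨rfl, rfl, rfl⟩ | ⟨rfl, rfl, rfl⟩ <;> (simp only [pairFlow]; ring)

theorem isMonotoneCycle_pairFlow [Fintype W] {layer : W → ℕ}
    (hup : ∀ e, layer (t e) = layer (s e) + 1) {a₁ a₂ x : W} {P Q : List E}
    (hP : IsPath s t a₁ x P) (hQ : IsPath s t a₂ x Q) {μ c : ℝ} (hc : IsClosing u v a₁ a₂ μ c)
    (hPQ : ∀ e ∈ P, e ∉ Q) : IsMonotoneCycle s t u v (pairFlow μ c P Q) := by
  refine ⟨isCirc_pairFlow hP hQ hc, μ, P, Q, hP.isChain, hQ.isChain, hP.nodup hup, hQ.nodup hup,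
    hPQ, rfl, ?_⟩
  rcases hc with ⟨-, rfl⟩ | ⟨-, -, rfl⟩ | ⟨-, -, rfl⟩ <;> simp [pairFlow]

/-- Splitting off a common edge `e` leaves two pairs of paths, into `s e` and out of `t e`;
the second closes up without the extra edge. -/
theorem hasCycleDecomp_pairFlow [Fintype W] {layer : W → ℕ}
    (hup : ∀ e, layer (t e) = layer (s e) + 1) (hlen : ∀ e, 0 ≤ len e) {a₁ a₂ x : W}
    {P Q : List E} (hP : IsPath s t a₁ x P) (hQ : IsPath s t a₂ x Q) {μ c : ℝ}
    (hc : IsClosing u v a₁ a₂ μ c) :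
    HasCycleDecomp s t u v len le (pairFlow μ c P Q)
      (|μ| * ((P.map len).sum + (Q.map len).sum) + le * |c|) := by
  by_cases hPQ : ∀ e ∈ P, e ∉ Q
  · exact (HasCycleDecomp.of_isMonotoneCycle (isMonotoneCycle_pairFlow hup hP hQ hc hPQ)).mono
      (cost_pairFlow_le hlen le μ c P Q)
  obtain ⟨e, heP, heQ⟩ : ∃ e ∈ P, e ∈ Q := by simpa using hPQ
  obtain ⟨P₁, P₂, rfl⟩ := List.append_of_mem heP
  obtain ⟨Q₁, Q₂, rfl⟩ := List.append_of_mem heQ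
  have h₁ := hasCycleDecomp_pairFlow hup hlen hP.append_cons.1 hQ.append_cons.1 hc
  have h₂ := hasCycleDecomp_pairFlow hup hlen hP.append_cons.2 hQ.append_cons.2
    (Or.inl ⟨rfl, rfl⟩ : IsClosing u v (t e) (t e) μ 0)
  rw [pairFlow_append_cons]
  refine (h₁.add h₂).mono ?_
  simp only [List.map_append, List.map_cons, List.sum_append, List.sum_cons, abs_zero, mul_zero,
    add_zero]
  nlinarith [mul_nonneg (abs_nonneg μ) (hlen e)]
termination_by P.length + Q.length
decreasing_by all_goals subst_vars; simp only [List.length_append, List.length_cons]; omega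

end CycleDecomposition

section SpanningPaths

variable (s t : E → W) (u v : W)

open Classical in
noncomputable def root (x : W) : W := if Reachable s t v x then v else u

open Classical in
noncomputable def treePath (x : W) : List E :=
  if h : Reachable s t (root s t u v x) x then h.choose else []

variable {s t u v} {layer : W → ℕ}

theorem root_eq_or (x : W) : root s t u v x = u ∨ root s t u v x = v := by
  unfold root
  split_ifs <;> simp

theorem root_self : root s t u v v = v := if_pos ⟨[], .nil v⟩

theorem reachable_root {x : W} (hx : Reachable s t u x ∨ Reachable s t v x) :
    Reachable s t (root s t u v x) x := by
  unfold root
  split_ifs with h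
  exacts [h, hx.resolve_right h]

theorem isPath_treePath {x : W} (hx : Reachable s t u x ∨ Reachable s t v x) :
    IsPath s t (root s t u v x) x (treePath s t u v x) := by
  unfold treePath
  rw [dif_pos (reachable_root hx)]
  exact (reachable_root hx).choose_spec

theorem layer_root (hu : layer u = 0) (hv : layer v = 0) (x : W) :
    layer (root s t u v x) = 0 := by
  rcases root_eq_or (s := s) (t := t) (u := u) (v := v) x with h | h <;> rwa [h]

theorem treePath_eq_nil (hup : ∀ e, layer (t e) = layer (s e) + 1) (hu : layer u = 0)
    (hv : layer v = 0) {x : W} (hx : layer x = 0) : treePath s t u v x = [] := by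
  unfold treePath
  split_ifs with h
  · exact (h.choose_spec.eq_of_layer_eq hup (by rw [layer_root hu hv, hx])).1
  · rfl

variable (s t u v) [DecidableEq W]

noncomputable def vIndicator (x : W) : ℝ := if root s t u v x = v then 1 else 0

variable {s t u v}

theorem vIndicator_self : vIndicator s t u v v = 1 := by simp [vIndicator, root_self]

theorem vIndicator_of_eq (huv : u = v) (x : W) : vIndicator s t u v x = 1 := by
  subst huv
  simp [vIndicator, (root_eq_or x).elim id id]

theorem vIndicator_of_ne (hup : ∀ e, layer (t e) = layer (s e) + 1) (hu : layer u = 0)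
    (hv : layer v = 0) (huv : u ≠ v) : vIndicator s t u v u = 0 := by
  have : ¬Reachable s t v u := fun ⟨_, hl⟩ => huv (hl.eq_of_layer_eq hup (by rw [hu, hv])).2.symm
  simp [vIndicator, root, this, huv]

theorem isClosing_root (x y : W) (μ : ℝ) :
    IsClosing u v (root s t u v x) (root s t u v y) μ
      (μ * (vIndicator s t u v x - vIndicator s t u v y)) := by
  unfold IsClosing vIndicator
  rcases eq_or_ne u v with rfl | huv
  · simp [(root_eq_or x).elim id id, (root_eq_or y).elim id id]
  rcases root_eq_or (s := s) (t := t) (u := u) (v := v) x with hx | hx <;>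
    rcases root_eq_or (s := s) (t := t) (u := u) (v := v) y with hy | hy <;>
    simp [hx, hy, huv, huv.symm]

end SpanningPaths

theorem len_nonneg {s : E → W} {layer : W → ℕ} {γ D : ℝ} (hγ : 0 < γ) (hD : 2 ≤ D)
    {len : E → ℝ} (hlen : ∀ e, len e = γ * D ^ layer (s e)) (e : E) : 0 ≤ len e := by
  rw [hlen]
  exact mul_nonneg hγ.le (pow_nonneg (by linarith) _)

section FundamentalCycles

variable [Fintype E] [DecidableEq E] [DecidableEq W] (s t : E → W) (u v : W)

noncomputable def fundCycle (μ : ℝ) (e : E) : (E → ℝ) × ℝ :=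
  pairFlow μ (μ * (vIndicator s t u v (s e) - vIndicator s t u v (t e)))
    (treePath s t u v (s e) ++ [e]) (treePath s t u v (t e))

variable {s t u v} {layer : W → ℕ} (hup : ∀ e, layer (t e) = layer (s e) + 1)
  (hu : layer u = 0) (hv : layer v = 0)
include hup hu hv

theorem hasCycleDecomp_fundCycle [Fintype W] {γ D : ℝ} (hγ : 0 < γ) (hD : 2 ≤ D)
    {len : E → ℝ} (hlen : ∀ e, len e = γ * D ^ layer (s e)) (le μ : ℝ) (e : E)
    (he : μ ≠ 0 → Reachable s t u (s e) ∨ Reachable s t v (s e)) :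
    HasCycleDecomp s t u v len le (fundCycle s t u v μ e)
      (4 * len e * |μ| + le * |μ * (vIndicator s t u v (s e) - vIndicator s t u v (t e))|) := by
  rcases eq_or_ne μ 0 with rfl | hμ
  · simpa [fundCycle, pairFlow, Prod.mk_zero_zero] using HasCycleDecomp.zero
  have hs := he hμ
  have ht : Reachable s t u (t e) ∨ Reachable s t v (t e) :=
    hs.imp Reachable.concat Reachable.concat
  refine (hasCycleDecomp_pairFlow hup (len_nonneg hγ hD hlen) ((isPath_treePath hs).concat rfl)
    (isPath_treePath ht) (isClosing_root _ _ μ)).mono ?_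
  have := (isPath_treePath hs).sum_len_add_le hup hγ hD hlen (isPath_treePath ht)
    (layer_root hu hv _) (layer_root hu hv _)
  rw [List.map_append, List.sum_append, List.map_singleton, List.sum_singleton]
  nlinarith [abs_nonneg μ]

theorem sum_fundCycle [Fintype W] {F : (E → ℝ) × ℝ} (hF : IsCirc s t u v F) :
    ∑ e, fundCycle s t u v (F.1 e) e + ((0 : E → ℝ), F.2 * vIndicator s t u v u) = F := by
  refine Prod.ext (funext fun f => ?_) ?_
  · have htel := hF.sum_mul_sub fun x => pathInd (treePath s t u v x) f
    rw [treePath_eq_nil hup hu hv hu, treePath_eq_nil hup hu hv hv, sub_self, mul_zero] at htel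
    simp only [Prod.fst_add, Prod.fst_sum, Pi.add_apply, Finset.sum_apply, fundCycle, pairFlow,
      pathInd_append, Pi.smul_apply, Pi.sub_apply, smul_eq_mul, Pi.zero_apply, add_zero]
    have hx : ∀ x, pathInd [x] f = if x = f then 1 else 0 := fun x => by
      simp [pathInd, List.count_singleton]
    simp only [hx, add_sub_right_comm, mul_add, mul_ite, mul_one, mul_zero, sum_add_distrib, htel,
      zero_add, sum_ite_eq', mem_univ, if_true]
  · simp only [Prod.snd_add, Prod.snd_sum, fundCycle, pairFlow]
    rw [hF.sum_mul_sub, vIndicator_self]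
    ring

end FundamentalCycles

section Routing

variable [Fintype E] [DecidableEq E] {s t : E → W} {layer : W → ℕ}

theorem IsPathFrom.sum_pathInd_mul_indicator [DecidableEq W]
    (hup : ∀ e, layer (t e) = layer (s e) + 1) {a x : W} {l : List E} (h : IsPathFrom s t a l)
    (ha : layer a = 0) (hx : layer x = 0) :
    ∑ e, pathInd l e * ((if t e = x then 1 else 0) - if s e = x then 1 else 0)
      = -(if a = x then 1 else 0) := by
  obtain ⟨b, hb⟩ := h.exists_isPath
  have hbx : b ≠ x := by
    rintro rfl
    have := hb.layer_eq hup
    have := List.length_pos_iff.2 h.1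
    omega
  rw [sum_pathInd_mul, hb.sum_map_sub fun w => if w = x then 1 else 0]
  simp [hbx]

omit [Fintype E] in
theorem reachable_of_sum_pathInd_ne_zero {a : W} {n : ℕ} {P : Fin n → List E} {μ : Fin n → ℝ}
    (hP : ∀ i, IsPathFrom s t a (P i)) {e : E} (he : ∑ i, μ i * pathInd (P i) e ≠ 0) :
    Reachable s t a (s e) := by
  obtain ⟨i, -, hi⟩ := Finset.exists_ne_zero_of_sum_ne_zero he
  have hmem : e ∈ P i := by
    by_contra h
    simp [pathInd, List.count_eq_zero_of_not_mem h] at hi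
  obtain ⟨b, hb⟩ := (hP i).exists_isPath
  obtain ⟨l₁, l₂, hl⟩ := List.append_of_mem hmem
  rw [hl] at hb
  exact ⟨l₁, hb.append_cons.1⟩

theorem sum_sum_pathInd_mul {n : ℕ} (P : Fin n → List E) (μ : Fin n → ℝ) (g : E → ℝ) :
    ∑ e, (∑ i, μ i * pathInd (P i) e) * g e = ∑ i, μ i * ∑ e, pathInd (P i) e * g e := by
  simp only [sum_mul, mul_sum, mul_assoc]
  exact sum_comm

theorem sum_abs_sum_pathInd_le {n : ℕ} (P : Fin n → List E) (μ : Fin n → ℝ) {κ : ℕ}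
    (hP : ∀ i, (P i).length ≤ κ) : ∑ e, |∑ i, μ i * pathInd (P i) e| ≤ κ * ∑ i, |μ i| := by
  calc ∑ e, |∑ i, μ i * pathInd (P i) e|
      ≤ ∑ e, ∑ i, |μ i| * pathInd (P i) e := by
        gcongr with e
        refine (abs_sum_le_sum_abs _ _).trans_eq (sum_congr rfl fun i _ => ?_)
        rw [abs_mul, abs_of_nonneg (show (0 : ℝ) ≤ pathInd (P i) e from Nat.cast_nonneg _)]
    _ = ∑ i, |μ i| * (P i).length := by
        rw [sum_comm]
        refine sum_congr rfl fun i _ => ?_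
        rw [← mul_sum, sum_pathInd]
    _ ≤ ∑ i, |μ i| * κ := by gcongr with i; exact_mod_cast hP i
    _ = κ * ∑ i, |μ i| := by rw [mul_sum]; simp only [mul_comm]

theorem sum_abs_eq_mul_sum {n : ℕ} {μ : Fin n → ℝ} {ε : ℝ} (hε : ε = 1 ∨ ε = -1)
    (hμ : ∀ i, 0 < ε * μ i) : ∑ i, |μ i| = ε * ∑ i, μ i := by
  rw [mul_sum]
  refine sum_congr rfl fun i _ => ?_
  have := hμ i
  rcases hε with rfl | rfl
  · rw [abs_of_pos (by linarith)]; ring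
  · rw [abs_of_neg (by linarith)]; ring

variable [DecidableEq W] {u v : W} {F : (E → ℝ) × ℝ}

theorem IsRoutingCirc.reachable_of_ne_zero (hF : IsRoutingCirc s t u v F) {e : E} (he : F.1 e ≠ 0) :
    Reachable s t u (s e) ∨ Reachable s t v (s e) := by
  obtain ⟨-, _, -, _, _, Pv, μv, Pu, μu, hPv, hPu, hF₁⟩ := hF
  simp only [hF₁] at he
  by_cases hv : ∑ i, μv i * pathInd (Pv i) e = 0
  · rw [hv, zero_add] at he
    exact Or.inl (reachable_of_sum_pathInd_ne_zero (fun j => (hPu j).1) he)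
  · exact Or.inr (reachable_of_sum_pathInd_ne_zero (fun i => (hPv i).1) hv)

/-- Testing the circulation against the indicators of `v` and `u`. -/
theorem IsCirc.sum_coeff_eq [Fintype W] (hF : IsCirc s t u v F)
    (hup : ∀ e, layer (t e) = layer (s e) + 1) (hu : layer u = 0) (hv : layer v = 0)
    (huv : u ≠ v) {n₁ n₂ : ℕ} {Pv : Fin n₁ → List E} {μv : Fin n₁ → ℝ} {Pu : Fin n₂ → List E}
    {μu : Fin n₂ → ℝ} (hPv : ∀ i, IsPathFrom s t v (Pv i)) (hPu : ∀ j, IsPathFrom s t u (Pu j))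
    (hF₁ : F.1 = fun e => (∑ i, μv i * pathInd (Pv i) e) + (∑ j, μu j * pathInd (Pu j) e)) :
    ∑ i, μv i = F.2 ∧ ∑ j, μu j = -F.2 := by
  have flux : ∀ x, layer x = 0 →
      ∑ e, F.1 e * ((if t e = x then 1 else 0) - if s e = x then 1 else 0)
        = -(∑ i, μv i) * (if v = x then 1 else 0) - (∑ j, μu j) * (if u = x then 1 else 0) := by
    intro x hx
    simp only [hF₁, add_mul, sum_add_distrib, sum_sum_pathInd_mul,
      (hPv _).sum_pathInd_mul_indicator hup hv hx, (hPu _).sum_pathInd_mul_indicator hup hu hx,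
      mul_neg, sum_neg_distrib, ← sum_mul]
    ring
  have hatv := isCirc_iff.1 hF fun w => if w = v then 1 else 0
  have hatu := isCirc_iff.1 hF fun w => if w = u then 1 else 0
  rw [flux v hv] at hatv
  rw [flux u hu] at hatu
  simp [huv] at hatv
  simp [Ne.symm huv] at hatu
  constructor <;> linarith

theorem IsRoutingCirc.sum_abs_le [Fintype W] (hF : IsRoutingCirc s t u v F)
    (hup : ∀ e, layer (t e) = layer (s e) + 1) {κ : ℕ} (hκ : ∀ w, layer w < κ)
    (hu : layer u = 0) (hv : layer v = 0) (huv : u ≠ v) :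
    ∑ e, |F.1 e| ≤ 2 * κ * |F.2| := by
  obtain ⟨hcirc, ε, hε, n₁, n₂, Pv, μv, Pu, μu, hPv, hPu, hF₁⟩ := hF
  obtain ⟨hμv, hμu⟩ :=
    hcirc.sum_coeff_eq hup hu hv huv (fun i => (hPv i).1) (fun j => (hPu j).1) hF₁
  have hAv := sum_abs_eq_mul_sum hε fun i => (hPv i).2
  have hAu := sum_abs_eq_mul_sum (μ := μu) (ε := -ε) (by rcases hε with rfl | rfl <;> norm_num)
    fun j => by linarith [(hPu j).2]
  have hA := sum_abs_sum_pathInd_le Pv μv fun i => (hPv i).1.length_le hup hκ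
  have hB := sum_abs_sum_pathInd_le Pu μu fun j => (hPu j).1.length_le hup hκ
  have hεF : ε * F.2 ≤ |F.2| := by
    rcases hε with rfl | rfl
    · simpa using le_abs_self F.2
    · simpa using neg_le_abs F.2
  calc ∑ e, |F.1 e|
      ≤ ∑ e, (|∑ i, μv i * pathInd (Pv i) e| + |∑ j, μu j * pathInd (Pu j) e|) := by
        gcongr with e
        rw [hF₁]
        exact abs_add_le _ _
    _ ≤ κ * (ε * F.2) + κ * (ε * F.2) := by
        rw [sum_add_distrib]
        rw [hAv, hμv] at hA
        rw [hAu, hμu] at hB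
        linarith
    _ ≤ 2 * κ * |F.2| := by nlinarith [(Nat.cast_nonneg κ : (0 : ℝ) ≤ κ)]

end Routing

section MainBound

variable [Fintype E] [DecidableEq E] [DecidableEq W] {s t : E → W} {layer : W → ℕ} {u v : W}
  {F : (E → ℝ) × ℝ}

theorem isMonotoneCycle_extraEdge [Fintype W] {c : ℝ} (h : u = v ∨ c = 0) :
    IsMonotoneCycle s t u v ((0 : E → ℝ), c) := by
  refine ⟨isCirc_iff.2 fun ρ => ?_, c, [], [], List.isChain_nil, List.isChain_nil,
    List.nodup_nil, List.nodup_nil, by simp, by funext e; simp [pathInd], Or.inl rfl⟩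
  rcases h with rfl | rfl <;> simp

omit [Fintype E] [DecidableEq E] in
theorem abs_vIndicator_sub_le (x y : W) : |vIndicator s t u v x - vIndicator s t u v y| ≤ 1 := by
  unfold vIndicator
  split_ifs <;> norm_num

theorem IsRoutingCirc.sum_cost_fundCycle_le [Fintype W] (hF : IsRoutingCirc s t u v F)
    (hup : ∀ e, layer (t e) = layer (s e) + 1) {κ : ℕ} (hκ : ∀ w, layer w < κ)
    (hu : layer u = 0) (hv : layer v = 0) {len : E → ℝ} (hlen : ∀ e, 0 ≤ len e) {le : ℝ}
    (hle : 0 ≤ le) :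
    ∑ e, (4 * len e * |F.1 e|
        + le * |F.1 e * (vIndicator s t u v (s e) - vIndicator s t u v (t e))|)
      + le * |F.2 * vIndicator s t u v u| ≤ 4 * κ * cost len le F := by
  have hκ₁ : (1 : ℝ) ≤ κ := by exact_mod_cast (hκ u).trans_le' (Nat.zero_le _)
  have hX : 0 ≤ ∑ e, len e * |F.1 e| := sum_nonneg fun e _ => mul_nonneg (hlen e) (abs_nonneg _)
  have hY : 0 ≤ le * |F.2| := mul_nonneg hle (abs_nonneg _)
  simp only [cost, sum_add_distrib, mul_assoc, ← mul_sum]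
  rcases eq_or_ne u v with huv | huv
  · simp only [vIndicator_of_eq huv, sub_self, mul_zero, abs_zero, sum_const_zero, add_zero,
      mul_one]
    nlinarith
  have hcross : ∑ e, |F.1 e * (vIndicator s t u v (s e) - vIndicator s t u v (t e))|
      ≤ 2 * κ * |F.2| := by
    refine (sum_le_sum fun e _ => ?_).trans (hF.sum_abs_le hup hκ hu hv huv)
    rw [abs_mul]
    exact mul_le_of_le_one_right (abs_nonneg _) (abs_vIndicator_sub_le _ _)
  rw [vIndicator_of_ne hup hu hv huv, mul_zero, abs_zero, mul_zero, add_zero]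
  nlinarith [mul_le_mul_of_nonneg_left hcross hle]

theorem IsRoutingCirc.hasCycleDecomp [Fintype W] (hF : IsRoutingCirc s t u v F)
    (hup : ∀ e, layer (t e) = layer (s e) + 1) {κ : ℕ} (hκ : ∀ w, layer w < κ) {γ D : ℝ}
    (hγ : 0 < γ) (hD : 2 ≤ D) {len : E → ℝ} (hlen : ∀ e, len e = γ * D ^ layer (s e))
    (hu : layer u = 0) (hv : layer v = 0) {le : ℝ} (hle : 0 ≤ le) :
    HasCycleDecomp s t u v len le F (4 * κ * cost len le F) := by
  have hextra : u = v ∨ F.2 * vIndicator s t u v u = 0 :=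
    (eq_or_ne u v).imp_right fun huv => by rw [vIndicator_of_ne hup hu hv huv, mul_zero]
  have h := (HasCycleDecomp.sum (univ : Finset E) fun e _ =>
    hasCycleDecomp_fundCycle hup hu hv hγ hD hlen le (F.1 e) e hF.reachable_of_ne_zero).add
    (HasCycleDecomp.of_isMonotoneCycle (isMonotoneCycle_extraEdge hextra))
  rw [sum_fundCycle hup hu hv hF.1] at h
  refine h.mono ?_
  simpa [cost] using hF.sum_cost_fundCycle_le hup hκ hu hv (len_nonneg hγ hD hlen) hle

end MainBound

end

/-- Flow decomposition on the abstracted HRG: a layered graph with `κ` layers in which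
every edge goes up exactly one layer and has length `γ·D^{layer of its tail}` (`D ≥ 2`),
plus one extra edge between two layer-`0` vertices `u`, `v` of length `le`.  Any routing
circulation `F` can be decomposed as a sum of circulations supported on monotone cycles
whose total ℓ1-length is at most `4κ` times the ℓ1-length of `F`. -/
theorem stmt_15 {W E : Type*} [Fintype W] [Fintype E] [DecidableEq W] [DecidableEq E]
    (κ : ℕ) (layer : W → ℕ) (hκ : ∀ w, layer w < κ)
    (s t : E → W) (hup : ∀ e, layer (t e) = layer (s e) + 1)
    (γ D : ℝ) (hγ : 0 < γ) (hD : 2 ≤ D)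
    (len : E → ℝ) (hlen : ∀ e, len e = γ * D ^ layer (s e))
    (u v : W) (hu : layer u = 0) (hv : layer v = 0)
    (le : ℝ) (hle : 0 < le)
    (F : (E → ℝ) × ℝ) (hF : IsRoutingCirc s t u v F) :
    ∃ (k : ℕ) (cs : Fin k → (E → ℝ) × ℝ),
      (∀ i, IsMonotoneCycle s t u v (cs i)) ∧
      (F.1 = fun e => ∑ i, (cs i).1 e) ∧ (F.2 = ∑ i, (cs i).2) ∧
      (∑ i, ((∑ e, len e * |(cs i).1 e|) + le * |(cs i).2|))
        ≤ 4 * κ * ((∑ e, len e * |F.1 e|) + le * |F.2|) := by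
  obtain ⟨cs, hcs, hsum, hcost⟩ := hF.hasCycleDecomp hup hκ hγ hD hlen hu hv hle.le
  have hF' : F = ∑ i : Fin cs.length, cs[i.1] := by rw [Fin.sum_univ_getElem, hsum]
  refine ⟨cs.length, fun i => cs[i.1], fun i => hcs _ (List.getElem_mem _), ?_, ?_, ?_⟩
  · rw [hF']
    funext e
    rw [Prod.fst_sum, Finset.sum_apply]
  · rw [hF', Prod.snd_sum]
  · exact (Fin.sum_univ_fun_getElem cs (cost len le)).trans_le hcost
end

section
/- Cost preservation under portal routing lift: let 𝒫 be the portal routed graph of (G, T, P) with lengths ℓ^𝒫 and gradients g^𝒫 defined as in the portal routing construction, and let Π_{𝒫→G} be the associated embedding. For any circulation c in 𝒫, the lifted flow Π_{𝒫→G}(c) is a circulation in G with ⟨g^𝒫, c⟩ = ⟨g, Π_{𝒫→G}(c)⟩ and ‖L Π_{𝒫→G}(c)‖₁ ≤ ‖L^𝒫 c‖₁. -/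
/-!
Let `B𝒫` be the signed incidence matrix of `𝒫` and `R` the matrix sending each portal to its
vertex of `G`. The embedding paths say that `Bᵀ Emb = (B𝒫 R)ᵀ`, so the boundary of the lift is
`Rᵀ (B𝒫ᵀ c) = 0`. The gradient of the lift, `(g Emb) c`, differs from `⟨g𝒫, c⟩` by
`⟨B𝒫 φ, c⟩ = ⟨φ, B𝒫ᵀ c⟩ = 0`, since potential differences are orthogonal to circulations.
The length bound is the triangle inequality applied to each coordinate of `Emb c`.
-/

open Matrix BigOperators

section Incidence

variable {E P V : Type*} [DecidableEq P] [DecidableEq V]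

def signedIncidence (src tgt : E → P) : Matrix E P ℝ :=
  fun e q => (if q = tgt e then 1 else 0) - (if q = src e then 1 else 0)

def vertexMapMatrix (f : P → V) : Matrix P V ℝ :=
  fun q w => if w = f q then 1 else 0

def IsCirculation [Fintype E] (src tgt : E → P) (c : E → ℝ) : Prop :=
  (signedIncidence src tgt)ᵀ *ᵥ c = 0

theorem isCirculation_iff [Fintype E] [Fintype P] (src tgt : E → P) (c : E → ℝ) :
    IsCirculation src tgt c ↔ ∀ q : P,
      (∑ e, if tgt e = q then c e else 0) - (∑ e, if src e = q then c e else 0) = 0 := by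
  simp only [IsCirculation, funext_iff, mulVec, dotProduct, transpose_apply, signedIncidence,
    sub_mul, ite_mul, one_mul, zero_mul, Finset.sum_sub_distrib, Pi.zero_apply, eq_comm]

theorem signedIncidence_mulVec [Fintype P] (src tgt : E → P) (φ : P → ℝ) :
    signedIncidence src tgt *ᵥ φ = fun e => φ (tgt e) - φ (src e) := by
  ext e
  simp [signedIncidence, mulVec, dotProduct, sub_mul, Finset.sum_sub_distrib]

theorem signedIncidence_comp [Fintype P] (src tgt : E → P) (f : P → V) :
    signedIncidence (f ∘ src) (f ∘ tgt) = signedIncidence src tgt * vertexMapMatrix f := by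
  ext e w
  simp only [signedIncidence, vertexMapMatrix, mul_apply, sub_mul, ite_mul, one_mul, zero_mul,
    Finset.sum_sub_distrib, Finset.sum_ite_eq', Finset.mem_univ, if_true, Function.comp_apply]

theorem IsCirculation.comp [Fintype E] [Fintype P] {src tgt : E → P} {c : E → ℝ}
    (hc : IsCirculation src tgt c) (f : P → V) : IsCirculation (f ∘ src) (f ∘ tgt) c := by
  rw [IsCirculation, signedIncidence_comp, transpose_mul, ← mulVec_mulVec, hc, mulVec_zero]

theorem IsCirculation.signedIncidence_mulVec_dotProduct [Fintype E] [Fintype P] {src tgt : E → P}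
    {c : E → ℝ} (hc : IsCirculation src tgt c) (φ : P → ℝ) :
    (signedIncidence src tgt *ᵥ φ) ⬝ᵥ c = 0 := by
  rw [dotProduct_comm, dotProduct_mulVec, ← mulVec_transpose, hc, zero_dotProduct]

end Incidence

theorem sum_mul_abs_mulVec_le {m n : Type*} [Fintype m] [Fintype n] (A : Matrix m n ℝ)
    (w : m → ℝ) (hw : ∀ i, 0 ≤ w i) (c : n → ℝ) :
    ∑ i, w i * |(A *ᵥ c) i| ≤ ∑ j, (∑ i, w i * |A i j|) * |c j| :=
  calc ∑ i, w i * |(A *ᵥ c) i|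
      ≤ ∑ i, w i * ∑ j, |A i j| * |c j| := by
        gcongr with i
        · exact hw i
        · exact (Finset.abs_sum_le_sum_abs (fun j => A i j * c j) _).trans_eq
            (by simp only [abs_mul])
    _ = ∑ j, (∑ i, w i * |A i j|) * |c j| := by
        simp only [Finset.mul_sum, Finset.sum_mul, mul_assoc]
        exact Finset.sum_comm

theorem stmt_16_general {V P Eg Ep : Type*} [Fintype P] [Fintype Eg] [Fintype Ep]
    [DecidableEq V] [DecidableEq P]
    (Bg : Matrix Eg V ℝ) (ℓ : Eg → ℝ) (hℓ : ∀ e, 0 < ℓ e) (g : Eg → ℝ)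
    (src tgt : Ep → P) (inc : P → V)
    (ℓp gp : Ep → ℝ) (Emb : Matrix Eg Ep ℝ) (φ : P → ℝ)
    (hpath : ∀ ep, Bgᵀ.mulVec (fun eg => Emb eg ep)
      = fun w => (if w = inc (tgt ep) then (1 : ℝ) else 0)
          - (if w = inc (src ep) then 1 else 0))
    (hgrad : ∀ ep, (∑ eg, g eg * Emb eg ep) = gp ep + φ (tgt ep) - φ (src ep))
    (hlen : ∀ ep, (∑ eg, ℓ eg * |Emb eg ep|) ≤ ℓp ep)
    (c : Ep → ℝ)
    (hcirc : ∀ q : P,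
      (∑ ep, if tgt ep = q then c ep else 0) - (∑ ep, if src ep = q then c ep else 0) = 0) :
    Bgᵀ.mulVec (Emb.mulVec c) = 0 ∧
    (∑ ep, gp ep * c ep) = (∑ eg, g eg * Emb.mulVec c eg) ∧
    (∑ eg, ℓ eg * |Emb.mulVec c eg|) ≤ ∑ ep, ℓp ep * |c ep| := by
  have hc : IsCirculation src tgt c := (isCirculation_iff src tgt c).2 hcirc
  have hBEmb : Bgᵀ * Emb = (signedIncidence (inc ∘ src) (inc ∘ tgt))ᵀ := by
    ext w ep
    exact congrFun (hpath ep) w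
  have hgEmb : g ᵥ* Emb = gp + signedIncidence src tgt *ᵥ φ := by
    ext ep
    rw [signedIncidence_mulVec, Pi.add_apply, ← add_sub_assoc, ← hgrad]
    rfl
  refine ⟨?_, ?_, ?_⟩
  · rw [mulVec_mulVec, hBEmb]
    exact hc.comp inc
  · change gp ⬝ᵥ c = g ⬝ᵥ (Emb *ᵥ c)
    rw [dotProduct_mulVec, hgEmb, add_dotProduct, hc.signedIncidence_mulVec_dotProduct, add_zero]
  · exact (sum_mul_abs_mulVec_le Emb ℓ (fun e => (hℓ e).le) c).trans
      (Finset.sum_le_sum fun ep _ => mul_le_mul_of_nonneg_right (hlen ep) (abs_nonneg _))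

/-- Cost preservation under the portal routing lift.  The portal routed graph `𝒫` has
edges `Ep` with endpoints `src, tgt` among the portals `P`, lengths `ℓp` and gradients
`gp`; `Emb` is the embedding matrix whose column at `ep` is the (signed indicator of the)
embedding path in `G` from `inc (src ep)` to `inc (tgt ep)` (hypothesis `hpath`).  The
portal-routing construction guarantees a potential `φ` on portals with
`⟨g, Emb 1_{ep}⟩ = gp(ep) + φ(tgt ep) − φ(src ep)` (tree-path edges have gradient 0 and the
portal routed edge carries the full fundamental-cycle gradient), and the embedding path
lengths are bounded by the 𝒫-lengths.  Then for every circulation `c` in `𝒫`, the lift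
`Emb c` is a circulation in `G` with `⟨gp, c⟩ = ⟨g, Emb c⟩` and `‖L Emb c‖₁ ≤ ‖L𝒫 c‖₁`. -/
theorem stmt_16 {V P Eg Ep : Type*} [Fintype V] [Fintype P] [Fintype Eg] [Fintype Ep]
    [DecidableEq V] [DecidableEq P]
    (Bg : Matrix Eg V ℝ) (ℓ : Eg → ℝ) (hℓ : ∀ e, 0 < ℓ e) (g : Eg → ℝ)
    (src tgt : Ep → P) (inc : P → V) (hinj : Function.Injective inc)
    (ℓp gp : Ep → ℝ) (Emb : Matrix Eg Ep ℝ) (φ : P → ℝ)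
    (hpath : ∀ ep, Bgᵀ.mulVec (fun eg => Emb eg ep)
      = fun w => (if w = inc (tgt ep) then (1 : ℝ) else 0)
          - (if w = inc (src ep) then 1 else 0))
    (hgrad : ∀ ep, (∑ eg, g eg * Emb eg ep) = gp ep + φ (tgt ep) - φ (src ep))
    (hlen : ∀ ep, (∑ eg, ℓ eg * |Emb eg ep|) ≤ ℓp ep)
    (c : Ep → ℝ)
    (hcirc : ∀ q : P,
      (∑ ep, if tgt ep = q then c ep else 0) - (∑ ep, if src ep = q then c ep else 0) = 0) :
    Bgᵀ.mulVec (Emb.mulVec c) = 0 ∧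
    (∑ ep, gp ep * c ep) = (∑ eg, g eg * Emb.mulVec c eg) ∧
    (∑ eg, ℓ eg * |Emb.mulVec c eg|) ≤ ∑ ep, ℓp ep * |c ep| :=
  stmt_16_general Bg ℓ hℓ g src tgt inc ℓp gp Emb φ hpath hgrad hlen c hcirc
end

section
/- Spanner layer sparsity: let H_i ⊆ G be a subgraph partitioned as H_i = Ĥ_i ∪ (H_i ∖ Ĥ_i), where (a) Ĥ_i has at most 2n vertices and girth greater than 2 log₂(2n), and (b) every edge of H_i ∖ Ĥ_i carries at least c := 2γΔ log(n)/2^i embedded paths, each of the at most N_i := Δn/2^i edges seen by the layer embeds into a path with at most 2γ log n edges. Then |E(Ĥ_i)| ≤ 8n and |E(H_i ∖ Ĥ_i)| ≤ n, hence |E(H_i)| ≤ 9n. -/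
/-!
Double counting: every edge of `F` lies on at least `c = 2γΔ log n / 2^i` routes, while the at
most `Δn / 2^i` routes have at most `2γ log n` edges each, so `|F| · c ≤ n · c`.

Girth: peel off vertices of degree at most `4` one at a time; each step removes at most `4`
edges, so `|E(Ĥ)| ≤ 4 |V| ≤ 8n` unless some nonempty subgraph of minimum degree `5` remains.
With girth greater than `2r`, `r = ⌊log₂ n⌋ + 1`, a vertex at distance `k < r` from a root has
exactly one neighbour closer to the root and none at the same distance, so the distance spheres
grow by a factor `4` and the sphere of radius `r` already has `5 · 4^(r-1) > 2n` vertices.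
-/

open Finset

namespace SimpleGraph

variable {V : Type*} {G : SimpleGraph V} {u v w x : V}

theorem Walk.IsPath.egirth_le_length_add {p q : G.Walk u v} (hp : p.IsPath) (hq : q.IsPath)
    (hne : p ≠ q) : G.egirth ≤ p.length + q.length := by
  obtain ⟨_, -, -, c, hc, hlen⟩ := hp.exists_isCycle_length_le_add_of_ne hq hne
  exact (egirth_le_length hc).trans (mod_cast hlen)

theorem Reachable.mem_support (h : G.Reachable u v) (hu : u ∈ G.support) : v ∈ G.support := by
  obtain ⟨p⟩ := h.symm
  cases p with
  | nil => exact hu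
  | cons hadj _ => exact ⟨_, hadj⟩

section DecidableEq

variable [DecidableEq V]

theorem Walk.notMem_support_of_length_eq_dist {p : G.Walk v u} (hp : p.length = G.dist v u)
    (hxu : x ≠ u) (hd : G.dist v u ≤ G.dist v x) : x ∉ p.support := fun hx =>
  ((G.dist_le (p.takeUntil x hx)).trans_lt (length_takeUntil_lt_length hx hxu)).not_ge (hp ▸ hd)

/-- Two shortest paths extended by an edge into `w` would close a short cycle. -/
theorem eq_of_adj_of_dist_le {u₁ u₂ : V} (hw : G.Reachable v w) (h₁ : G.Adj u₁ w)
    (h₂ : G.Adj u₂ w) (hd₁ : G.dist v u₁ ≤ G.dist v w) (hd₂ : G.dist v u₂ ≤ G.dist v w)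
    (hg : ((G.dist v u₁ + G.dist v u₂ + 2 : ℕ) : ℕ∞) < G.egirth) : u₁ = u₂ := by
  by_contra hne
  obtain ⟨p₁, hp₁, hl₁⟩ := (hw.trans h₁.symm.reachable).exists_path_of_dist
  obtain ⟨p₂, hp₂, hl₂⟩ := (hw.trans h₂.symm.reachable).exists_path_of_dist
  have hq₁ := hp₁.concat (Walk.notMem_support_of_length_eq_dist hl₁ h₁.ne' hd₁) h₁
  have hq₂ := hp₂.concat (Walk.notMem_support_of_length_eq_dist hl₂ h₂.ne' hd₂) h₂
  have hq : p₁.concat h₁ ≠ p₂.concat h₂ := fun h => hne <| by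
    simpa using congrArg Walk.penultimate h
  have := hq₁.egirth_le_length_add hq₂ hq
  rw [Walk.length_concat, Walk.length_concat, hl₁, hl₂] at this
  exact this.not_gt (lt_of_eq_of_lt (by push_cast; ring) hg)

end DecidableEq

variable [Fintype V]

/-- For `k = 0` this also contains every vertex not reachable from `v`, whose `dist` is `0`. -/
noncomputable def distSphere (G : SimpleGraph V) (v : V) (k : ℕ) : Finset V :=
  {x | G.dist v x = k}

@[simp]
theorem mem_distSphere {k : ℕ} : x ∈ G.distSphere v k ↔ G.dist v x = k := by
  simp [distSphere]

variable [DecidableRel G.Adj]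

theorem distSphere_one : G.distSphere v 1 = G.neighborFinset v := by
  ext; simp

variable [DecidableEq V]

theorem card_distSphere_mul_le {d k : ℕ} (hk : 1 ≤ k)
    (hg : ((2 * k + 2 : ℕ) : ℕ∞) < G.egirth)
    (hδ : ∀ x ∈ G.distSphere v k, d + 1 ≤ G.degree x) :
    #(G.distSphere v k) * d ≤ #(G.distSphere v (k + 1)) := by
  rw [← mul_one #(G.distSphere v (k + 1))]
  refine card_mul_le_card_mul G.Adj (fun a ha => ?_) (fun b hb => ?_)
  · rw [mem_distSphere] at ha
    have hr : G.Reachable v a := .of_dist_ne_zero (by omega)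
    have hlower : #((G.neighborFinset a).filter fun x => ¬G.dist v x = k + 1) ≤ 1 := by
      refine card_le_one.2 fun x hx y hy => ?_
      simp only [mem_filter, mem_neighborFinset] at hx hy
      have hdx : G.dist v x ≤ k := by
        rcases hx.1.diff_dist_adj (u := v) with h | h | h <;> omega
      have hdy : G.dist v y ≤ k := by
        rcases hy.1.diff_dist_adj (u := v) with h | h | h <;> omega
      exact eq_of_adj_of_dist_le hr hx.1.symm hy.1.symm (by omega) (by omega)
        (lt_of_le_of_lt (by gcongr; omega) hg)
    have hsplit := card_filter_add_card_filter_not (s := G.neighborFinset a)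
      (p := fun x => G.dist v x = k + 1)
    have hupper : (G.neighborFinset a).filter (G.dist v · = k + 1) =
        (G.distSphere v (k + 1)).bipartiteAbove G.Adj a := by
      ext x; simp [bipartiteAbove, and_comm]
    have := hδ a (mem_distSphere.2 ha)
    rw [card_neighborFinset_eq_degree] at hsplit
    rw [← hupper]
    omega
  · rw [mem_distSphere] at hb
    have hr : G.Reachable v b := .of_dist_ne_zero (by omega)
    refine card_le_one.2 fun x hx y hy => ?_
    simp only [bipartiteBelow, mem_filter, mem_distSphere] at hx hy
    exact eq_of_adj_of_dist_le hr hx.2 hy.2 (by omega) (by omega) (by convert hg using 2; omega)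

theorem mul_pow_le_card_distSphere {d r k : ℕ} (hg : ((2 * r : ℕ) : ℕ∞) < G.egirth)
    (hδ : ∀ x, G.Reachable v x → d + 1 ≤ G.degree x) (hk : 1 ≤ k) (hkr : k ≤ r) :
    (d + 1) * d ^ (k - 1) ≤ #(G.distSphere v k) := by
  induction k, hk using Nat.le_induction with
  | base => simpa [distSphere_one] using hδ v .rfl
  | succ k hk ih =>
    have hstep := card_distSphere_mul_le (v := v) (d := d) hk
      (lt_of_le_of_lt (by gcongr; omega) hg)
      fun x hx => hδ x (.of_dist_ne_zero (by rw [mem_distSphere.1 hx]; omega))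
    calc (d + 1) * d ^ (k + 1 - 1) = (d + 1) * d ^ (k - 1) * d := by
          rw [mul_assoc, ← pow_succ, Nat.sub_add_cancel hk, Nat.add_sub_cancel]
      _ ≤ #(G.distSphere v k) * d := by gcongr; exact ih (by omega)
      _ ≤ #(G.distSphere v (k + 1)) := hstep

theorem mul_pow_le_card_of_lt_egirth {d r : ℕ} (hr : 1 ≤ r) (hg : ((2 * r : ℕ) : ℕ∞) < G.egirth)
    (hδ : ∀ x, G.Reachable v x → d + 1 ≤ G.degree x) :
    (d + 1) * d ^ (r - 1) ≤ Fintype.card V :=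
  (mul_pow_le_card_distSphere hg hδ hr le_rfl).trans (card_le_univ _)

theorem card_edgeFinset_le_mul_card_support {k : ℕ} (P : SimpleGraph V → Prop)
    (hP : ∀ ⦃G H : SimpleGraph V⦄, H ≤ G → P G → P H)
    (hlow : ∀ (G : SimpleGraph V) [DecidableRel G.Adj], P G → G ≠ ⊥ →
      ∃ x ∈ G.support, G.degree x ≤ k)
    (G : SimpleGraph V) [DecidableRel G.Adj] (hG : P G) :
    #G.edgeFinset ≤ k * Fintype.card G.support := by
  induction h : #G.edgeFinset using Nat.strong_induction_on generalizing G with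
  | _ m ih =>
    by_cases hbot : G = ⊥
    · simp [← h, edgeFinset_eq_empty.2 hbot]
    obtain ⟨x, hx, hdeg⟩ := hlow G hG hbot
    have hpos := (G.degree_pos_iff_mem_support x).2 hx
    have hedges := G.card_edgeFinset_deleteIncidenceSet x
    have hdeg_le : G.degree x ≤ #G.edgeFinset := by
      rw [← card_incidenceFinset_eq_degree]; exact card_le_card (G.incidenceFinset_subset x)
    have hsupp := G.card_support_deleteIncidenceSet hx
    have ih' := ih #(G.deleteIncidenceSet x).edgeFinset (by omega) (G.deleteIncidenceSet x)
      (hP (G.deleteIncidenceSet_le x) hG) rfl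
    have hcard : 0 < Fintype.card G.support := Fintype.card_pos_iff.2 ⟨⟨x, hx⟩⟩
    have hmul : k * (Fintype.card G.support - 1) + k = k * Fintype.card G.support := by
      rw [← Nat.mul_succ, Nat.succ_eq_add_one, Nat.sub_add_cancel hcard]
    have := Nat.mul_le_mul_left k hsupp
    omega

theorem card_edgeFinset_le_of_lt_egirth {k r : ℕ} (hr : 1 ≤ r)
    (hV : Fintype.card V < (k + 1) * k ^ (r - 1)) (hg : ((2 * r : ℕ) : ℕ∞) < G.egirth) :
    #G.edgeFinset ≤ k * Fintype.card V := by
  refine (card_edgeFinset_le_mul_card_support (fun H => ((2 * r : ℕ) : ℕ∞) < H.egirth)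
    (fun _ _ hle h => h.trans_le (egirth_anti hle)) ?_ G hg).trans
    (Nat.mul_le_mul_left _ (Fintype.card_subtype_le _))
  intro H _ hH hbot
  by_contra! hdeg
  obtain ⟨a, b, hab⟩ := ne_bot_iff_exists_adj.1 hbot
  exact hV.not_ge (mul_pow_le_card_of_lt_egirth hr hH fun x hx => hdeg x (hx.mem_support ⟨b, hab⟩))

theorem card_edgeFinset_le_of_logb_lt_length {n : ℕ} (hn : 1 ≤ n) (hV : Fintype.card V ≤ 2 * n)
    (hcyc : ∀ (v : V) (c : G.Walk v v), c.IsCycle → 2 * Real.logb 2 (2 * n) < c.length) :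
    #G.edgeFinset ≤ 8 * n := by
  set L := Nat.log 2 n
  have hlog : (L + 1 : ℝ) ≤ Real.logb 2 (2 * n) := by
    rw [Real.logb_mul two_ne_zero (by positivity), Real.logb_self_eq_one one_lt_two, add_comm]
    gcongr
    exact Real.natLog_le_logb n 2
  have hg : ((2 * (L + 1) : ℕ) : ℕ∞) < G.egirth := by
    refine (Nat.cast_lt.2 (Nat.lt_succ_self _)).trans_le (le_egirth.2 fun v c hc => ?_)
    have : (2 * (L + 1) : ℝ) < c.length := by linarith [hcyc v c hc]
    exact_mod_cast this
  have hV' : Fintype.card V < (4 + 1) * 4 ^ (L + 1 - 1) := by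
    have h2L : n < 2 ^ L * 2 := pow_succ 2 L ▸ Nat.lt_pow_succ_log_self one_lt_two n
    have h24 : 2 ^ L ≤ 4 ^ L := Nat.pow_le_pow_left (by norm_num) L
    simp only [Nat.add_sub_cancel]
    omega
  have := card_edgeFinset_le_of_lt_egirth (by omega) hV' hg
  omega

end SimpleGraph

theorem card_mul_le_card_mul_of_routes {F P : Type*} [Fintype F] [Fintype P] [DecidableEq F]
    (route : P → Finset F) {c L : ℝ} (hlen : ∀ p, (#(route p) : ℝ) ≤ L)
    (hload : ∀ e, c ≤ #{p | e ∈ route p}) :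
    Fintype.card F * c ≤ Fintype.card P * L := by
  simpa using card_nsmul_le_card_nsmul (s := univ) (t := univ) (fun e p => e ∈ route p)
    (fun e _ => hload e) (fun p _ => by simpa [bipartiteBelow] using hlen p)

/-- Spanner layer sparsity.  Layer `i` of the incremental spanner consists of a girth
part `Ĥ` (a graph on at most `2n` vertices in which every cycle is longer than
`2 log₂(2n)`) and a set `F` of congested edges: each of the at most `Δn/2^i` embedded
paths of the layer uses at most `2γ log₂ n` edges of `F`, while each edge of `F` carries
at least `2γΔ log₂(n)/2^i` paths.  Then `|E(Ĥ)| ≤ 8n`, `|F| ≤ n`, and the layer has at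
most `9n` edges in total. -/
theorem stmt_19 {W F P : Type*} [Fintype W] [Fintype F] [Fintype P] [DecidableEq F]
    (n Δ i : ℕ) (hn : 2 ≤ n) (hΔ : 1 ≤ Δ) (γ : ℝ) (hγ : 1 ≤ γ)
    (Hhat : SimpleGraph W) [DecidableRel Hhat.Adj]
    (hW : Fintype.card W ≤ 2 * n)
    (hgirth : ∀ (v : W) (c : Hhat.Walk v v), c.IsCycle →
      2 * Real.logb 2 (2 * n) < (c.length : ℝ))
    (route : P → Finset F)
    (hP : (Fintype.card P : ℝ) ≤ (Δ : ℝ) * n / 2 ^ i)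
    (hlen : ∀ p, ((route p).card : ℝ) ≤ 2 * γ * Real.logb 2 n)
    (hload : ∀ e : F, 2 * γ * (Δ : ℝ) * Real.logb 2 n / 2 ^ i ≤
      ((Finset.univ.filter fun p : P => e ∈ route p).card : ℝ)) :
    Hhat.edgeFinset.card ≤ 8 * n ∧ Fintype.card F ≤ n ∧
    Hhat.edgeFinset.card + Fintype.card F ≤ 9 * n := by
  classical
  have hHhat := Hhat.card_edgeFinset_le_of_logb_lt_length (by omega) hW hgirth
  have hF : Fintype.card F ≤ n := by
    have hlog : 0 < Real.logb 2 n := Real.logb_pos one_lt_two (by exact_mod_cast hn)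
    have hΔ' : (1 : ℝ) ≤ Δ := by exact_mod_cast hΔ
    have hcount := (card_mul_le_card_mul_of_routes route hlen hload).trans
      (mul_le_mul_of_nonneg_right hP (by positivity))
    refine Nat.cast_le.1 (le_of_mul_le_mul_right (hcount.trans_eq ?_) (by positivity))
    ring
  exact ⟨hHhat, hF, by omega⟩
end
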